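/- arXiv:1406.0998 — 4 statements merged into one kernel-verified Lean document; each statement's English description precedes it below -/
import Mathlib

section
/- A bar-joint framework (G,p) in a finite-dimensional real normed vector space (X,‖·‖) is well-positioned if and only if the rigidity map f_G : X^V → ℝ^E, x ↦ (‖x_v − x_w‖)_{vw∈E}, is (Fréchet) differentiable at p. Moreover, in this case the differential df_G(p) equals the rigidity matrix R(G,p), i.e. df_G(p)u = (φ_{v,w}(u_v − u_w))_{vw∈E} for all u ∈ X^V. -/
open scoped Topology

noncomputable section

variable {X : Type*} [NormedAddCommGroup X] [NormedSpace ℝ X]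

/-- `f` is a support functional for `x₀`. -/
def IsSupportFunctional (f : X →L[ℝ] ℝ) (x₀ : X) : Prop :=
  (∀ x : X, ‖x‖ = 1 → |f x| ≤ 1) ∧ f x₀ = 1

/-- The norm of `X` is smooth at `x₀`: there is exactly one support functional for `x₀`. -/
def NormSmoothAt (x₀ : X) : Prop :=
  ∃! f : X →L[ℝ] ℝ, IsSupportFunctional f x₀

variable {V : Type*}

/-- The rigidity map of a graph `G`: `x ↦ (‖x v - x w‖)_{vw ∈ E}`. -/
def rigidityMap (G : SimpleGraph V) (x : V → X) : G.edgeSet → ℝ := fun e =>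
  Sym2.lift ⟨fun v w => ‖x v - x w‖, fun v w => norm_sub_rev (x v) (x w)⟩ e.1

/-- The framework `(G, p)` is well-positioned. -/
def WellPositioned (G : SimpleGraph V) (p : V → X) : Prop :=
  ∀ ⦃v w : V⦄, G.Adj v w → NormSmoothAt (‖p v - p w‖⁻¹ • (p v - p w))

/-- `u` is an infinitesimal flex of `(G, p)`: the directional derivative of the rigidity
map at `p` in direction `u` exists and equals `0`. -/
def IsInfFlex (G : SimpleGraph V) (p u : V → X) : Prop :=
  Filter.Tendsto (fun t : ℝ => t⁻¹ • (rigidityMap G (p + t • u) - rigidityMap G p))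
    (𝓝[≠] (0 : ℝ)) (𝓝 0)

/-- A rigid motion of `(X, ‖·‖)`. -/
def IsRigidMotion (α : X → ℝ → X) : Prop :=
  (∀ x, ContinuousOn (α x) (Set.Icc (-1 : ℝ) 1)) ∧
  (∀ x, α x 0 = x) ∧
  (∀ x, DifferentiableAt ℝ (α x) 0) ∧
  (∀ x y : X, ∀ t ∈ Set.Icc (-1 : ℝ) 1, ‖α x t - α y t‖ = ‖x - y‖)

/-- `u` is a trivial infinitesimal flex of `(G, p)`. -/
def IsTrivialFlex (G : SimpleGraph V) (p u : V → X) : Prop :=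
  IsInfFlex G p u ∧
    ∃ α : X → ℝ → X, IsRigidMotion α ∧ ∀ v, u v = deriv (α (p v)) 0

/-- `T(G, p)`, the set of trivial infinitesimal flexes. -/
def trivialFlexes (G : SimpleGraph V) (p : V → X) : Set (V → X) :=
  {u | IsTrivialFlex G p u}

/-- `(G, p)` is infinitesimally rigid. -/
def InfRigid (G : SimpleGraph V) (p : V → X) : Prop :=
  ∀ u, IsInfFlex G p u → IsTrivialFlex G p u

/-- `(G, p)` is isostatic. -/
def Isostatic [DecidableEq V] (G : SimpleGraph V) (p : V → X) : Prop :=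
  InfRigid G p ∧ ∀ e ∈ G.edgeSet, ¬ InfRigid (G.deleteEdges {e}) p

/-- `R` is a rigidity matrix for `(G, p)`: for every edge `vw` the entry is given by the
support functional of `(p v - p w)/‖p v - p w‖`. -/
def IsRigidityMatrix (G : SimpleGraph V) (p : V → X)
    (R : (V → X) →ₗ[ℝ] (G.edgeSet → ℝ)) : Prop :=
  ∀ ⦃v w : V⦄ (h : G.Adj v w), ∃ φ : X →L[ℝ] ℝ,
    IsSupportFunctional φ (‖p v - p w‖⁻¹ • (p v - p w)) ∧
    ∀ u : V → X, R u ⟨s(v, w), (G.mem_edgeSet).mpr h⟩ = φ (u v - u w)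

section Symmetric

variable {Γ : Type*} [Group Γ]

/-- `θ` is an action of `Γ` on the graph `G` by automorphisms. -/
def IsGraphAction (G : SimpleGraph V) (θ : Γ →* Equiv.Perm V) : Prop :=
  ∀ (γ : Γ) (v w : V), G.Adj v w ↔ G.Adj (θ γ v) (θ γ w)

/-- `τ` is a representation of `Γ` by linear isometries of `X`. -/
def IsIsometricRep (τ : Γ →* (X ≃ₗ[ℝ] X)) : Prop :=
  ∀ (γ : Γ) (x : X), ‖τ γ x‖ = ‖x‖

/-- `(G, p)` is `Γ`-symmetric with respect to `θ` and `τ`. -/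
def IsSymmetricFramework (G : SimpleGraph V) (p : V → X)
    (θ : Γ →* Equiv.Perm V) (τ : Γ →* (X ≃ₗ[ℝ] X)) : Prop :=
  ∀ (γ : Γ) (v : V), τ γ (p v) = p (θ γ v)

end Symmetric

/-- The value of the representation `τ ⊗ P_V` at a group element `γ`, given as the pair
`T = τ(γ)`, `σ = θ(γ)`:  `((τ ⊗ P_V)(γ) u) v = τ(γ) (u (γ⁻¹ v))`. -/
def tauPV (T : X ≃ₗ[ℝ] X) (σ : Equiv.Perm V) : (V → X) →ₗ[ℝ] (V → X) where
  toFun u := fun v => T (u (σ⁻¹ v))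
  map_add' u₁ u₂ := by funext v; simp
  map_smul' c u := by funext v; simp

section Symmetric2

variable {Γ : Type*} [Group Γ]

/-- The set `V_γ` of vertices fixed by `γ`. -/
def fixedVerts (θ : Γ →* Equiv.Perm V) (γ : Γ) : Set V := {v | θ γ v = v}

/-- The set `E_γ` of edges fixed by `γ`. -/
def fixedEdges (G : SimpleGraph V) (θ : Γ →* Equiv.Perm V) (γ : Γ) : Set G.edgeSet :=
  {e | Sym2.map (θ γ) e.1 = e.1}

/-- The action of `γ` on the edges of `G`. -/
def edgePerm (G : SimpleGraph V) (θ : Γ →* Equiv.Perm V) (hθ : IsGraphAction G θ)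
    (γ : Γ) : G.edgeSet → G.edgeSet := fun e =>
  ⟨Sym2.map (θ γ) e.1, by
    obtain ⟨e, he⟩ := e
    induction e using Sym2.ind with
    | _ v w =>
      rw [Sym2.map_pair_eq, SimpleGraph.mem_edgeSet]
      exact (hθ γ v w).mp (G.mem_edgeSet.mp he)⟩

end Symmetric2

/-- The linear map on `ι → ℝ` induced by `g : ι → ι` (coordinate permutation). -/
def permRep {ι : Type*} (g : ι → ι) : (ι → ℝ) →ₗ[ℝ] (ι → ℝ) where
  toFun a := fun i => a (g i)
  map_add' _ _ := rfl
  map_smul' _ _ := rfl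

/-- `T` is a reflection: `T = I - 2P` for a rank-one linear projection `P`. -/
def IsReflection (T : X →ₗ[ℝ] X) : Prop :=
  ∃ P : X →ₗ[ℝ] X, P ∘ₗ P = P ∧ Module.finrank ℝ (LinearMap.range P) = 1 ∧
    T = LinearMap.id - (2 : ℝ) • P

/-- `T` is an inversion: `T = -I`. -/
def IsInversion (T : X →ₗ[ℝ] X) : Prop := T = -LinearMap.id

/-- `T` is an `n`-fold rotation `C_n`. -/
def IsCnRotation (T : X →ₗ[ℝ] X) (n : ℕ) : Prop :=
  ∃ Y Z : Submodule ℝ X, IsCompl Y Z ∧ Module.finrank ℝ Y = 2 ∧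
    (∀ z ∈ Z, T z = z) ∧
    ∃ b : Module.Basis (Fin 2) ℝ Y,
      T ↑(b 0) = Real.cos (2 * Real.pi / n) • (↑(b 0) : X) +
        Real.sin (2 * Real.pi / n) • (↑(b 1) : X) ∧
      T ↑(b 1) = (-Real.sin (2 * Real.pi / n)) • (↑(b 0) : X) +
        Real.cos (2 * Real.pi / n) • (↑(b 1) : X)

/-- `T` is an improper rotation `S_n`: `T = S ⊕ (-I_Z)`. -/
def IsImproperRotation (T : X →ₗ[ℝ] X) (n : ℕ) : Prop :=
  ∃ Y Z : Submodule ℝ X, IsCompl Y Z ∧ Module.finrank ℝ Y = 2 ∧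
    (∀ z ∈ Z, T z = -z) ∧
    ∃ b : Module.Basis (Fin 2) ℝ Y,
      T ↑(b 0) = Real.cos (2 * Real.pi / n) • (↑(b 0) : X) +
        Real.sin (2 * Real.pi / n) • (↑(b 1) : X) ∧
      T ↑(b 1) = (-Real.sin (2 * Real.pi / n)) • (↑(b 0) : X) +
        Real.cos (2 * Real.pi / n) • (↑(b 1) : X)

/-- `F` is a facet of the convex body `B`. -/
def IsFacet (B F : Set X) : Prop :=
  ∃ f : X →L[ℝ] ℝ, (∀ x ∈ B, f x ≤ 1) ∧ F = {x ∈ B | f x = 1} ∧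
    ∃ x ∈ F, ∃ y ∈ F, x ≠ y

/-- The norm of `X` is polyhedral with unit ball a quadrilateral. -/
def QuadrilateralBall (X : Type*) [NormedAddCommGroup X] [NormedSpace ℝ X] : Prop :=
  (∃ F : Finset X, (Metric.closedBall (0 : X) 1 : Set X) = convexHull ℝ (F : Set X)) ∧
    Nat.card ↥(Set.extremePoints ℝ (Metric.closedBall (0 : X) 1 : Set X)) = 4

/-- `T` preserves the facets of the unit ball: `T F ∈ {F, -F}` for each facet `F`. -/
def PreservesFacets (T : X ≃ₗ[ℝ] X) : Prop :=
  ∀ F : Set X, IsFacet (Metric.closedBall (0 : X) 1 : Set X) F →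
    ((⇑T) '' F = F ∨ (⇑T) '' F = (fun x : X => -x) '' F)

/-- `G` is a `(2,2)`-tight graph. -/
def TwoTwoTight {W : Type*} (G : SimpleGraph W) : Prop :=
  Nat.card ↥G.edgeSet = 2 * Nat.card W - 2 ∧
  ∀ H : G.Subgraph, 2 ≤ Nat.card ↥H.verts →
    Nat.card ↥H.edgeSet ≤ 2 * Nat.card ↥H.verts - 2

/-- The subgraph `H` of `G` is invariant under the action `θ`. -/
def SubgraphInvariant {Γ : Type*} [Group Γ] {G : SimpleGraph V}
    (θ : Γ →* Equiv.Perm V) (H : G.Subgraph) : Prop :=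
  ∀ γ : Γ, (∀ v ∈ H.verts, θ γ v ∈ H.verts) ∧
    ∀ v w, H.Adj v w → H.Adj (θ γ v) (θ γ w)

namespace RigidityAux

lemma support_le_norm {f : X →L[ℝ] ℝ} {x₀ : X} (hf : IsSupportFunctional f x₀) (x : X) :
    f x ≤ ‖x‖ := by
  rcases eq_or_ne x 0 with rfl | hx
  · simp
  · have h1 : ‖‖x‖⁻¹ • x‖ = 1 := by
      rw [norm_smul, norm_inv, norm_norm, inv_mul_cancel₀ (norm_ne_zero_iff.mpr hx)]
    have h2 := (abs_le.mp (hf.1 _ h1)).2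
    have h3 : f (‖x‖⁻¹ • x) = ‖x‖⁻¹ * f x := by rw [map_smul]; rfl
    rw [h3] at h2
    have hxpos : (0 : ℝ) < ‖x‖ := norm_pos_iff.mpr hx
    calc f x = ‖x‖ * (‖x‖⁻¹ * f x) := by field_simp
    _ ≤ ‖x‖ * 1 := by exact mul_le_mul_of_nonneg_left h2 hxpos.le
    _ = ‖x‖ := mul_one _

lemma abs_support_le_norm {f : X →L[ℝ] ℝ} {x₀ : X} (hf : IsSupportFunctional f x₀) (x : X) :
    |f x| ≤ ‖x‖ := by
  rcases abs_cases (f x) with ⟨h, _⟩ | ⟨h, _⟩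
  · rw [h]; exact support_le_norm hf x
  · rw [h, ← map_neg, ← norm_neg x]; exact support_le_norm hf (-x)

lemma support_eq_fderiv {x₀ : X} (hd : DifferentiableAt ℝ (fun x : X => ‖x‖) x₀)
    {f : X →L[ℝ] ℝ} (hf : IsSupportFunctional f x₀) (hx : ‖x₀‖ = 1) :
    f = fderiv ℝ (fun x : X => ‖x‖) x₀ := by
  have hmin : IsLocalMin (fun x : X => ‖x‖ - f x) x₀ := by
    apply Filter.Eventually.of_forall
    intro x
    have := support_le_norm hf x
    simp only [hx, hf.2]
    linarith
  have hdf : DifferentiableAt ℝ (fun x : X => f x) x₀ := f.differentiable.differentiableAt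
  have h0 := hmin.fderiv_eq_zero
  rw [fderiv_fun_sub hd hdf, f.fderiv, sub_eq_zero] at h0
  exact h0.symm

lemma isSupport_fderiv {x₀ : X} (hd : DifferentiableAt ℝ (fun x : X => ‖x‖) x₀)
    (hx : ‖x₀‖ = 1) : IsSupportFunctional (fderiv ℝ (fun x : X => ‖x‖) x₀) x₀ := by
  have hx0 : x₀ ≠ 0 := by intro h; rw [h, norm_zero] at hx; norm_num at hx
  obtain ⟨g, hg1, hg2⟩ := exists_dual_vector ℝ x₀ (norm_ne_zero_iff.mpr hx0)
  have hgs : IsSupportFunctional g x₀ := by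
    constructor
    · intro x h1
      calc |g x| = ‖g x‖ := rfl
      _ ≤ ‖g‖ * ‖x‖ := g.le_opNorm x
      _ = 1 := by rw [hg1, h1, mul_one]
    · rw [hg2, hx]; norm_num
  rw [← support_eq_fderiv hd hgs hx]
  exact hgs

lemma normSmoothAt_of_differentiableAt {x₀ : X}
    (hd : DifferentiableAt ℝ (fun x : X => ‖x‖) x₀) (hx : ‖x₀‖ = 1) : NormSmoothAt x₀ :=
  ⟨fderiv ℝ (fun x : X => ‖x‖) x₀, isSupport_fderiv hd hx,
    fun g hg => support_eq_fderiv hd hg hx⟩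

lemma hasFDerivAt_norm_of_unique [FiniteDimensional ℝ X] {x₀ : X} (hx : ‖x₀‖ = 1)
    {f : X →L[ℝ] ℝ} (hf : IsSupportFunctional f x₀)
    (huniq : ∀ g : X →L[ℝ] ℝ, IsSupportFunctional g x₀ → g = f) :
    HasFDerivAt (fun x : X => ‖x‖) f x₀ := by
  rw [hasFDerivAt_iff_isLittleO_nhds_zero]
  by_contra H
  rw [Asymptotics.isLittleO_iff] at H
  push_neg at H
  obtain ⟨ε, hε, hev⟩ := H
  obtain ⟨u, hu0, hu⟩ := Filter.exists_seq_forall_of_frequently hev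
  have hnonneg : ∀ y : X, 0 ≤ ‖x₀ + y‖ - ‖x₀‖ - f y := by
    intro y
    have h1 : f (x₀ + y) ≤ ‖x₀ + y‖ := support_le_norm hf _
    rw [map_add, hf.2] at h1
    rw [hx]; linarith
  have key : ∀ n, ε * ‖u n‖ < ‖x₀ + u n‖ - 1 - f (u n) := by
    intro n
    have := hu n
    rw [Real.norm_eq_abs, abs_of_nonneg (hnonneg (u n)), hx] at this
    simpa using this
  have hun0 : ∀ n, u n ≠ 0 := by
    intro n h
    have := key n
    rw [h] at this
    simp [hx] at this
  set d : ℕ → X := fun n => ‖u n‖⁻¹ • u n with hd_def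
  have hdmem : ∀ n, d n ∈ Metric.sphere (0 : X) 1 := by
    intro n
    simp only [mem_sphere_iff_norm, sub_zero, hd_def, norm_smul, norm_inv, norm_norm]
    exact inv_mul_cancel₀ (norm_ne_zero_iff.mpr (hun0 n))
  obtain ⟨d₀, hd₀mem, k₁, hk₁, hdconv⟩ :=
    (isCompact_sphere (0 : X) 1).tendsto_subseq hdmem
  have hX : Nontrivial X := by
    refine nontrivial_of_ne x₀ 0 ?_
    intro h; rw [h, norm_zero] at hx; norm_num at hx
  choose φ hφ1 hφ2 using fun n => exists_dual_vector' ℝ (x₀ + u n)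
  have hφmem : ∀ n, φ (k₁ n) ∈ Metric.closedBall (0 : X →L[ℝ] ℝ) 1 := by
    intro n; rw [Metric.mem_closedBall, dist_zero_right, hφ1]
  obtain ⟨φ₀, _, k₂, hk₂, hφconv⟩ :=
    (isCompact_closedBall (0 : X →L[ℝ] ℝ) 1).tendsto_subseq hφmem
  set m : ℕ → ℕ := fun n => k₁ (k₂ n) with hm_def
  have hm : StrictMono m := hk₁.comp hk₂
  have hu' : Filter.Tendsto (fun n => u (m n)) Filter.atTop (𝓝 0) :=
    hu0.comp hm.tendsto_atTop
  have hun' : Filter.Tendsto (fun n => ‖u (m n)‖) Filter.atTop (𝓝 0) := by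
    simpa [Function.comp_def] using (continuous_norm.tendsto (0 : X)).comp hu'
  have hd' : Filter.Tendsto (fun n => d (m n)) Filter.atTop (𝓝 d₀) :=
    hdconv.comp hk₂.tendsto_atTop
  have hφ' : Filter.Tendsto (fun n => φ (m n)) Filter.atTop (𝓝 φ₀) := hφconv
  have heval : ∀ y : X, Filter.Tendsto (fun n => φ (m n) y) Filter.atTop (𝓝 (φ₀ y)) := by
    intro y
    exact ((ContinuousLinearMap.apply ℝ ℝ y).continuous.tendsto φ₀).comp hφ'
  have hφ0norm : ‖φ₀‖ = 1 := by
    have h1 : Filter.Tendsto (fun n => ‖φ (m n)‖) Filter.atTop (𝓝 ‖φ₀‖) :=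
      (continuous_norm.tendsto φ₀).comp hφ'
    have h2 : Filter.Tendsto (fun n => ‖φ (m n)‖) Filter.atTop (𝓝 1) := by
      simp only [hφ1]; exact tendsto_const_nhds
    exact tendsto_nhds_unique h1 h2
  -- φ (m n) x₀ ≥ ‖x₀ + u (m n)‖ - ‖u (m n)‖
  have habs : ∀ n y, |φ n y| ≤ ‖y‖ := by
    intro n y
    calc |φ n y| = ‖φ n y‖ := rfl
    _ ≤ ‖φ n‖ * ‖y‖ := (φ n).le_opNorm y
    _ = ‖y‖ := by rw [hφ1, one_mul]
  have hφx₀eq : ∀ n, φ n x₀ = ‖x₀ + u n‖ - φ n (u n) := by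
    intro n
    have := hφ2 n
    rw [map_add] at this
    have h2 : φ n x₀ + φ n (u n) = ‖x₀ + u n‖ := by exact_mod_cast this
    linarith
  have hφ₀x₀ : φ₀ x₀ = 1 := by
    have hge : (1 : ℝ) ≤ φ₀ x₀ := by
      have hxn : Filter.Tendsto (fun n => ‖x₀ + u (m n)‖) Filter.atTop (𝓝 1) := by
        have h1 : Filter.Tendsto (fun n => x₀ + u (m n)) Filter.atTop (𝓝 (x₀ + 0)) :=
          tendsto_const_nhds.add hu'
        rw [add_zero] at h1
        have h2 := (continuous_norm.tendsto x₀).comp h1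
        simpa [hx, Function.comp_def] using h2
      have hRHS : Filter.Tendsto (fun n => ‖x₀ + u (m n)‖ - ‖u (m n)‖) Filter.atTop
          (𝓝 1) := by
        have h := hxn.sub hun'
        simpa using h
      refine le_of_tendsto_of_tendsto' hRHS (heval x₀) (fun n => ?_)
      rw [hφx₀eq (m n)]
      have := (abs_le.mp (habs (m n) (u (m n)))).2
      linarith
    have hle : φ₀ x₀ ≤ 1 := by
      have := (abs_le.mp (by
        calc |φ₀ x₀| = ‖φ₀ x₀‖ := rfl
        _ ≤ ‖φ₀‖ * ‖x₀‖ := φ₀.le_opNorm x₀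
        _ = 1 := by rw [hφ0norm, hx, mul_one])).2
      exact this
    linarith
  -- key inequality per n
  have hkey2 : ∀ n, f (d n) + ε ≤ φ n (d n) := by
    intro n
    have hpos : (0 : ℝ) < ‖u n‖ := norm_pos_iff.mpr (hun0 n)
    have h1 : φ n x₀ ≤ 1 := le_trans (le_abs_self _) (by rw [← hx]; exact habs n x₀)
    have h2 : ‖x₀ + u n‖ - 1 ≤ φ n (u n) := by
      have := hφx₀eq n; linarith
    have h3 : f (u n) + ε * ‖u n‖ ≤ φ n (u n) := by
      have := key n; linarith
    have h4 : φ n (d n) = ‖u n‖⁻¹ * φ n (u n) := by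
      rw [hd_def]; simp [map_smul]
    have h5 : f (d n) = ‖u n‖⁻¹ * f (u n) := by
      rw [hd_def]; simp [map_smul]
    rw [h4, h5]
    have h6 : ‖u n‖⁻¹ * (f (u n) + ε * ‖u n‖) ≤ ‖u n‖⁻¹ * φ n (u n) :=
      mul_le_mul_of_nonneg_left h3 (inv_nonneg.mpr hpos.le)
    calc ‖u n‖⁻¹ * f (u n) + ε = ‖u n‖⁻¹ * (f (u n) + ε * ‖u n‖) := by
          field_simp
    _ ≤ ‖u n‖⁻¹ * φ n (u n) := h6
  have hlim : f d₀ + ε ≤ φ₀ d₀ := by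
    have hL : Filter.Tendsto (fun n => f (d (m n)) + ε) Filter.atTop (𝓝 (f d₀ + ε)) :=
      ((f.continuous.tendsto d₀).comp hd').add tendsto_const_nhds
    have hc : Continuous (fun q : (X →L[ℝ] ℝ) × X => q.1 q.2) :=
      isBoundedBilinearMap_apply.continuous
    have hR : Filter.Tendsto (fun n => φ (m n) (d (m n))) Filter.atTop (𝓝 (φ₀ d₀)) :=
      (hc.tendsto (φ₀, d₀)).comp (hφ'.prodMk_nhds hd')
    exact le_of_tendsto_of_tendsto' hL hR (fun n => hkey2 (m n))
  have hφ₀s : IsSupportFunctional φ₀ x₀ := by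
    constructor
    · intro x h1
      calc |φ₀ x| = ‖φ₀ x‖ := rfl
      _ ≤ ‖φ₀‖ * ‖x‖ := φ₀.le_opNorm x
      _ = 1 := by rw [hφ0norm, h1, mul_one]
    · exact hφ₀x₀
  have := huniq φ₀ hφ₀s
  rw [this] at hlim
  linarith

lemma differentiableAt_of_normSmoothAt [FiniteDimensional ℝ X] {x₀ : X}
    (hs : NormSmoothAt x₀) (hx : ‖x₀‖ = 1) :
    DifferentiableAt ℝ (fun x : X => ‖x‖) x₀ := by
  obtain ⟨f, hf, hu⟩ := hs
  exact (hasFDerivAt_norm_of_unique hx hf hu).differentiableAt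

end RigidityAux

/-- A framework is well-positioned iff the rigidity map is differentiable at
`p`, in which case the differential is the rigidity matrix. -/
theorem wellPositioned_iff_differentiableAt_rigidityMap
    {X : Type*} [NormedAddCommGroup X] [NormedSpace ℝ X] [FiniteDimensional ℝ X]
    {V : Type*} [Fintype V] [DecidableEq V]
    (G : SimpleGraph V) [Fintype ↥G.edgeSet] (p : V → X) (hp : Function.Injective p) :
    (WellPositioned G p ↔ DifferentiableAt ℝ (rigidityMap (X := X) G) p) ∧
    (WellPositioned G p →
      ∀ (u : V → X) (v w : V) (h : G.Adj v w) (φ : X →L[ℝ] ℝ),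
        IsSupportFunctional φ (‖p v - p w‖⁻¹ • (p v - p w)) →
        fderiv ℝ (rigidityMap G) p u ⟨s(v, w), (G.mem_edgeSet).mpr h⟩ = φ (u v - u w)) := by
  classical
  have hne : ∀ {v w : V}, G.Adj v w → p v - p w ≠ 0 := fun {v w} h =>
    sub_ne_zero.mpr (fun hh => h.ne (hp hh))
  have hinv : ∀ {v w : V}, G.Adj v w → ‖p v - p w‖⁻¹ ≠ 0 := fun {v w} h =>
    inv_ne_zero (norm_ne_zero_iff.mpr (hne h))
  have hnorm1 : ∀ {v w : V}, G.Adj v w → ‖‖p v - p w‖⁻¹ • (p v - p w)‖ = 1 := by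
    intro v w h
    rw [norm_smul, norm_inv, norm_norm, inv_mul_cancel₀ (norm_ne_zero_iff.mpr (hne h))]
  have coordEq : ∀ (v w : V) (he : s(v, w) ∈ G.edgeSet),
      (fun x : V → X => rigidityMap G x ⟨s(v, w), he⟩) = fun x : V → X => ‖x v - x w‖ :=
    fun v w he => rfl
  have coord_iff : ∀ (v w : V), v ≠ w →
      (DifferentiableAt ℝ (fun x : V → X => ‖x v - x w‖) p ↔
        DifferentiableAt ℝ (fun x : X => ‖x‖) (p v - p w)) := by
    intro v w hvw
    constructor
    · intro hc
      set M : X → V → X := fun y => Function.update p v (y + p w) with hM_def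
      have hMp : M (p v - p w) = p := by
        funext v'
        by_cases hv : v' = v
        · subst hv; simp [hM_def]
        · simp [hM_def, Function.update_of_ne hv]
      have hM : DifferentiableAt ℝ M (p v - p w) := by
        rw [differentiableAt_pi]
        intro v'
        by_cases hv : v' = v
        · subst hv
          have h1 : (fun y : X => M y v') = fun y => y + p w := by
            funext y; simp [hM_def]
          rw [h1]
          exact differentiableAt_id.add_const _
        · have h1 : (fun y : X => M y v') = fun _ => p v' := by
            funext y; simp [hM_def, Function.update_of_ne hv]
          rw [h1]
          exact differentiableAt_const _
      have hfun : (fun y : X => ‖y‖) = (fun x : V → X => ‖x v - x w‖) ∘ M := by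
        funext y
        simp [hM_def, Function.comp, Function.update_of_ne (Ne.symm hvw)]
      rw [hfun]
      exact DifferentiableAt.comp _ (hMp.symm ▸ hc) hM
    · intro hn
      set L : (V → X) →L[ℝ] X :=
        ContinuousLinearMap.proj (R := ℝ) (φ := fun _ : V => X) v -
          ContinuousLinearMap.proj (R := ℝ) (φ := fun _ : V => X) w with hL_def
      have hLp : L p = p v - p w := by
        simp [hL_def, ContinuousLinearMap.sub_apply, ContinuousLinearMap.proj_apply]
      have hfun : (fun x : V → X => ‖x v - x w‖) = (fun y : X => ‖y‖) ∘ (fun x => L x) := by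
        funext x
        simp [hL_def, ContinuousLinearMap.sub_apply, ContinuousLinearMap.proj_apply]
      rw [hfun]
      exact DifferentiableAt.comp _ (hLp.symm ▸ hn) L.differentiableAt
  have hforward : WellPositioned G p → DifferentiableAt ℝ (rigidityMap (X := X) G) p := by
    intro hwp
    rw [differentiableAt_pi]
    rintro ⟨q, he⟩
    induction q using Sym2.ind with
    | _ v w =>
      have h : G.Adj v w := (G.mem_edgeSet).mp he
      have hn := RigidityAux.differentiableAt_of_normSmoothAt (hwp h) (hnorm1 h)
      have hn2 : DifferentiableAt ℝ (fun x : X => ‖x‖) (p v - p w) :=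
        (differentiableAt_norm_smul (hinv h)).mpr hn
      rw [coordEq v w he]
      exact (coord_iff v w h.ne).mpr hn2
  constructor
  · constructor
    · exact hforward
    · intro hd v w h
      have hc := differentiableAt_pi.mp hd ⟨s(v, w), (G.mem_edgeSet).mpr h⟩
      rw [coordEq v w ((G.mem_edgeSet).mpr h)] at hc
      have hn2 := (coord_iff v w h.ne).mp hc
      have hn := (differentiableAt_norm_smul (hinv h)).mp hn2
      exact RigidityAux.normSmoothAt_of_differentiableAt hn (hnorm1 h)
  · intro hwp u v w h φ hφ
    have hdall : ∀ i : G.edgeSet, DifferentiableAt ℝ (fun x : V → X => rigidityMap G x i) p :=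
      differentiableAt_pi.mp (hforward hwp)
    obtain ⟨f, hfs, hfu⟩ := hwp h
    have hφf : φ = f := hfu φ hφ
    have hF : HasFDerivAt (fun x : X => ‖x‖) f (‖p v - p w‖⁻¹ • (p v - p w)) :=
      RigidityAux.hasFDerivAt_norm_of_unique (hnorm1 h) hfs hfu
    have htpos : (0 : ℝ) < ‖p v - p w‖ := norm_pos_iff.mpr (hne h)
    have hF2 : HasFDerivAt (fun x : X => ‖x‖) f (p v - p w) := by
      have h2 := hF.hasFDerivAt_norm_smul_pos htpos
      rwa [smul_inv_smul₀ (ne_of_gt htpos)] at h2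
    set L : (V → X) →L[ℝ] X :=
      ContinuousLinearMap.proj (R := ℝ) (φ := fun _ : V => X) v -
          ContinuousLinearMap.proj (R := ℝ) (φ := fun _ : V => X) w with hL_def
    have hLp : L p = p v - p w := by
        simp [hL_def, ContinuousLinearMap.sub_apply, ContinuousLinearMap.proj_apply]
    have hcomp : HasFDerivAt (fun x : V → X => ‖x v - x w‖) (f.comp L) p := by
      have h1 : HasFDerivAt (fun x : V → X => ‖L x‖) (f.comp L) p :=
        (hLp.symm ▸ hF2).comp p L.hasFDerivAt
      have h2 : (fun x : V → X => ‖x v - x w‖) = fun x => ‖L x‖ := by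
        funext x
        simp [hL_def, ContinuousLinearMap.sub_apply, ContinuousLinearMap.proj_apply]
      rwa [h2]
    have hco : fderiv ℝ
        (fun x : V → X => rigidityMap G x ⟨s(v, w), (G.mem_edgeSet).mpr h⟩) p = f.comp L := by
      rw [coordEq v w ((G.mem_edgeSet).mpr h)]
      exact hcomp.fderiv
    have hpi : fderiv ℝ (rigidityMap (X := X) G) p =
        ContinuousLinearMap.pi (fun i => fderiv ℝ (fun x : V → X => rigidityMap G x i) p) :=
      fderiv_pi hdall
    rw [hpi]
    simp only [ContinuousLinearMap.pi_apply]
    rw [hco]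
    simp [hL_def, hφf, ContinuousLinearMap.sub_apply, ContinuousLinearMap.proj_apply, map_sub]
end
end

section
/- Let (G,p) be a well-positioned bar-joint framework in a finite-dimensional real normed vector space (X,‖·‖). If (G,p) is isostatic and H is a subgraph of G, then |E(H)| ≤ dim(X)·|V(H)| − d, where d is the dimension of the linear span in X^{V(H)} of the set T(H, p|_{V(H)}) of trivial infinitesimal flexes of the subframework (H, p|_{V(H)}). -/
open scoped Topology

noncomputable section

variable {X : Type*} [NormedAddCommGroup X] [NormedSpace ℝ X]

variable {V : Type*}

namespace MaxAux

variable {E : Type*} [NormedAddCommGroup E] [NormedSpace ℝ E]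

/-- Difference quotient of the norm at `x` in direction `d`. -/
def Q (x d : E) (t : ℝ) : ℝ := t⁻¹ * (‖x + t • d‖ - ‖x‖)

lemma Q_mono (x d : E) {s t : ℝ} (hs : s ≠ 0) (ht : t ≠ 0) (hst : s ≤ t) :
    Q x d s ≤ Q x d t := by
  have hconv : ConvexOn ℝ Set.univ (fun t : ℝ => ‖x + t • d‖) := by
    have h := (convexOn_univ_norm (E := E)).comp_affineMap
      (AffineMap.lineMap x (x + d) : ℝ →ᵃ[ℝ] E)
    have heq : ((norm : E → ℝ) ∘ (AffineMap.lineMap x (x + d) : ℝ →ᵃ[ℝ] E))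
        = fun t : ℝ => ‖x + t • d‖ := by
      funext t
      simp [AffineMap.lineMap_apply, add_comm]
    rw [heq] at h
    simpa using h
  have h := hconv.secant_mono (a := 0) (Set.mem_univ _) (Set.mem_univ _) (Set.mem_univ _)
    hs ht hst
  simp only [zero_smul, add_zero, sub_zero] at h
  simpa [Q, div_eq_inv_mul] using h

lemma mul_Q (x d : E) {t : ℝ} (ht : t ≠ 0) : t * Q x d t = ‖x + t • d‖ - ‖x‖ := by
  rw [Q, ← mul_assoc, mul_inv_cancel₀ ht, one_mul]

lemma abs_Q_le (x d : E) {t : ℝ} (ht : t ≠ 0) : |Q x d t| ≤ ‖d‖ := by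
  have h1 : |‖x + t • d‖ - ‖x‖| ≤ ‖t • d‖ := by
    simpa using abs_norm_sub_norm_le (x + t • d) x
  rw [Q, abs_mul, abs_inv]
  have ht' : (0 : ℝ) < |t| := abs_pos.2 ht
  rw [norm_smul, Real.norm_eq_abs] at h1
  calc |t|⁻¹ * |‖x + t • d‖ - ‖x‖| ≤ |t|⁻¹ * (|t| * ‖d‖) := by gcongr
    _ = ‖d‖ := by field_simp

/-- Right derivative. -/
def rP (x d : E) : ℝ := sInf (Q x d '' Set.Ioi 0)

/-- Left derivative. -/
def rM (x d : E) : ℝ := sSup (Q x d '' Set.Iio 0)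

lemma bddBelow_QIoi (x d : E) : BddBelow (Q x d '' Set.Ioi 0) := by
  refine ⟨-‖d‖, ?_⟩
  rintro r ⟨t, ht, rfl⟩
  have := abs_Q_le x d (ne_of_gt (Set.mem_Ioi.1 ht))
  linarith [neg_abs_le (Q x d t)]

lemma bddAbove_QIio (x d : E) : BddAbove (Q x d '' Set.Iio 0) := by
  refine ⟨‖d‖, ?_⟩
  rintro r ⟨t, ht, rfl⟩
  have := abs_Q_le x d (ne_of_lt (Set.mem_Iio.1 ht))
  linarith [le_abs_self (Q x d t)]

lemma ne_QIoi (x d : E) : (Q x d '' Set.Ioi 0).Nonempty := ⟨Q x d 1, 1, Set.mem_Ioi.2 one_pos, rfl⟩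

lemma ne_QIio (x d : E) : (Q x d '' Set.Iio 0).Nonempty :=
  ⟨Q x d (-1), -1, Set.mem_Iio.2 (by norm_num), rfl⟩

lemma rP_le (x d : E) {t : ℝ} (ht : 0 < t) : rP x d ≤ Q x d t :=
  csInf_le (bddBelow_QIoi x d) ⟨t, Set.mem_Ioi.2 ht, rfl⟩

lemma le_rP (x d : E) {t : ℝ} (ht : t < 0) : Q x d t ≤ rP x d := by
  refine le_csInf (ne_QIoi x d) ?_
  rintro r ⟨t', ht', rfl⟩
  exact Q_mono x d (ne_of_lt ht) (ne_of_gt (Set.mem_Ioi.1 ht')) (ht.trans (Set.mem_Ioi.1 ht')).le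

lemma le_rM (x d : E) {t : ℝ} (ht : t < 0) : Q x d t ≤ rM x d :=
  le_csSup (bddAbove_QIio x d) ⟨t, Set.mem_Iio.2 ht, rfl⟩

lemma rM_le (x d : E) {t : ℝ} (ht : 0 < t) : rM x d ≤ Q x d t := by
  refine csSup_le (ne_QIio x d) ?_
  rintro r ⟨t', ht', rfl⟩
  exact Q_mono x d (ne_of_lt (Set.mem_Iio.1 ht')) (ne_of_gt ht) ((Set.mem_Iio.1 ht').le.trans ht.le)

lemma rM_le_rP (x d : E) : rM x d ≤ rP x d := by
  refine csSup_le (ne_QIio x d) ?_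
  rintro r ⟨t', ht', rfl⟩
  exact le_rP x d (Set.mem_Iio.1 ht')

lemma abs_rP_le (x d : E) : |rP x d| ≤ ‖d‖ := by
  rw [abs_le]
  constructor
  · have h := abs_Q_le x d (t := -1) (by norm_num)
    have h2 := le_rP x d (t := -1) (by norm_num)
    rw [abs_le] at h
    linarith [h.1]
  · have h := abs_Q_le x d (t := 1) one_ne_zero
    have h2 := rP_le x d (t := 1) one_pos
    rw [abs_le] at h
    linarith [h.2]

lemma abs_rM_le (x d : E) : |rM x d| ≤ ‖d‖ := by
  rw [abs_le]
  constructor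
  · have h := abs_Q_le x d (t := -1) (by norm_num)
    have h2 := le_rM x d (t := -1) (by norm_num)
    rw [abs_le] at h
    linarith [h.1]
  · have h := abs_Q_le x d (t := 1) one_ne_zero
    have h2 := rM_le x d (t := 1) one_pos
    rw [abs_le] at h
    linarith [h.2]

lemma pt_rP (x d : E) (t : ℝ) : ‖x‖ + t * rP x d ≤ ‖x + t • d‖ := by
  rcases lt_trichotomy t 0 with ht | rfl | ht
  · have h1 : Q x d t ≤ rP x d := le_rP x d ht
    have h2 := mul_Q x d (ne_of_lt ht)
    nlinarith
  · simp
  · have h1 : rP x d ≤ Q x d t := rP_le x d ht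
    have h2 := mul_Q x d (ne_of_gt ht)
    nlinarith

lemma pt_rM (x d : E) (t : ℝ) : ‖x‖ + t * rM x d ≤ ‖x + t • d‖ := by
  rcases lt_trichotomy t 0 with ht | rfl | ht
  · have h1 : Q x d t ≤ rM x d := le_rM x d ht
    have h2 := mul_Q x d (ne_of_lt ht)
    nlinarith
  · simp
  · have h1 : rM x d ≤ Q x d t := rM_le x d ht
    have h2 := mul_Q x d (ne_of_gt ht)
    nlinarith

lemma key_full (x d : E) {s : ℝ} (habs : |s| ≤ ‖d‖)
    (hpt : ∀ t : ℝ, ‖x‖ + t * s ≤ ‖x + t • d‖) (a b : ℝ) :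
    a * ‖x‖ + b * s ≤ ‖a • x + b • d‖ := by
  rcases lt_trichotomy a 0 with ha | rfl | ha
  · have h1 : ‖b • d‖ - ‖(-a) • x‖ ≤ ‖a • x + b • d‖ := by
      have := norm_sub_norm_le (b • d) ((-a) • x)
      have he : b • d - (-a) • x = a • x + b • d := by
        rw [neg_smul]; abel
      rwa [he] at this
    have h2 : b * s ≤ ‖b • d‖ := by
      calc b * s ≤ |b * s| := le_abs_self _
        _ = |b| * |s| := abs_mul b s
        _ ≤ |b| * ‖d‖ := by
            have : (0:ℝ) ≤ |b| := abs_nonneg b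
            exact mul_le_mul_of_nonneg_left habs this
        _ = ‖b • d‖ := by rw [norm_smul, Real.norm_eq_abs]
    have h3 : ‖(-a) • x‖ = (-a) * ‖x‖ := by
      rw [norm_smul, Real.norm_eq_abs, abs_of_pos (by linarith)]
    nlinarith
  · have h2 : b * s ≤ ‖b • d‖ := by
      calc b * s ≤ |b * s| := le_abs_self _
        _ = |b| * |s| := abs_mul b s
        _ ≤ |b| * ‖d‖ := mul_le_mul_of_nonneg_left habs (abs_nonneg b)
        _ = ‖b • d‖ := by rw [norm_smul, Real.norm_eq_abs]
    simpa using h2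
  · have h := hpt (b / a)
    have h2 : a * ‖x + (b / a) • d‖ = ‖a • x + b • d‖ := by
      rw [show a • x + b • d = a • (x + (b / a) • d) by
        rw [smul_add, smul_smul]; field_simp]
      rw [norm_smul, Real.norm_eq_abs, abs_of_pos ha]
    have h3 : a * (‖x‖ + (b / a) * s) ≤ a * ‖x + (b / a) • d‖ :=
      mul_le_mul_of_nonneg_left h ha.le
    rw [h2] at h3
    have : a * (‖x‖ + (b / a) * s) = a * ‖x‖ + b * s := by field_simp
    linarith

lemma exists_support_functional (x d : E) (hx : x ≠ 0) {s : ℝ}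
    (key : ∀ a b : ℝ, a * ‖x‖ + b * s ≤ ‖a • x + b • d‖) :
    ∃ φ : E →L[ℝ] ℝ, IsSupportFunctional φ (‖x‖⁻¹ • x) ∧ φ d = s := by
  have habs : |s| ≤ ‖d‖ := by
    rw [abs_le]
    constructor
    · have := key 0 (-1); simp at this; linarith
    · have := key 0 1; simp at this; linarith
  set N : E → ℝ := fun y => sInf (Set.range fun b : ℝ => ‖y - b • d‖ + b * s) with hN
  have bdd : ∀ y : E, BddBelow (Set.range fun b : ℝ => ‖y - b • d‖ + b * s) := by
    intro y
    refine ⟨-‖y‖, ?_⟩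
    rintro r ⟨b, rfl⟩
    have h1 : ‖b • d‖ - ‖y‖ ≤ ‖y - b • d‖ := by
      have := norm_sub_norm_le (b • d) y
      have he : b • d - y = -(y - b • d) := by abel
      rw [he, norm_neg] at this
      linarith
    have h2 : -(|b| * ‖d‖) ≤ b * s := by
      have : |b * s| ≤ |b| * ‖d‖ := by
        rw [abs_mul]
        exact mul_le_mul_of_nonneg_left habs (abs_nonneg b)
      linarith [neg_abs_le (b * s)]
    have h3 : ‖b • d‖ = |b| * ‖d‖ := by rw [norm_smul, Real.norm_eq_abs]
    simp only []
    linarith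
  have N_le : ∀ (y : E) (b : ℝ), N y ≤ ‖y - b • d‖ + b * s := fun y b =>
    csInf_le (bdd y) ⟨b, rfl⟩
  have le_N : ∀ (y : E) (c : ℝ), (∀ b : ℝ, c ≤ ‖y - b • d‖ + b * s) → c ≤ N y := by
    intro y c h
    refine le_csInf ⟨_, ⟨0, rfl⟩⟩ ?_
    rintro r ⟨b, rfl⟩
    exact h b
  have N_le_norm : ∀ y : E, N y ≤ ‖y‖ := fun y => by simpa using N_le y 0
  have le₁ : ∀ (y : E) (c : ℝ), 0 < c → N (c • y) ≤ c * N y := by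
    intro y c hc
    rw [← div_le_iff₀' hc]
    refine le_N y _ (fun b => ?_)
    rw [div_le_iff₀' hc]
    calc N (c • y) ≤ ‖c • y - (c * b) • d‖ + (c * b) * s := N_le _ _
      _ = c * (‖y - b • d‖ + b * s) := by
          rw [show c • y - (c * b) • d = c • (y - b • d) by
            rw [smul_sub, mul_smul]]
          rw [norm_smul, Real.norm_eq_abs, abs_of_pos hc]; ring
  have N_hom : ∀ (c : ℝ), 0 < c → ∀ y : E, N (c • y) = c * N y := by
    intro c hc y
    refine le_antisymm (le₁ y c hc) ?_
    have h := le₁ (c • y) c⁻¹ (inv_pos.2 hc)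
    rw [inv_smul_smul₀ (ne_of_gt hc)] at h
    have h2 := mul_le_mul_of_nonneg_left h hc.le
    rw [← mul_assoc, mul_inv_cancel₀ (ne_of_gt hc), one_mul] at h2
    exact h2
  have N_add : ∀ y z : E, N (y + z) ≤ N y + N z := by
    intro y z
    have h1 : ∀ b₁ b₂ : ℝ, N (y + z) ≤ (‖y - b₁ • d‖ + b₁ * s) + (‖z - b₂ • d‖ + b₂ * s) := by
      intro b₁ b₂
      refine (N_le (y + z) (b₁ + b₂)).trans ?_
      have he : y + z - (b₁ + b₂) • d = (y - b₁ • d) + (z - b₂ • d) := by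
        rw [add_smul]; abel
      rw [he]
      have := norm_add_le (y - b₁ • d) (z - b₂ • d)
      linarith
    have h2 : ∀ b₁ : ℝ, N (y + z) - (‖y - b₁ • d‖ + b₁ * s) ≤ N z := fun b₁ =>
      le_N z _ (fun b₂ => by linarith [h1 b₁ b₂])
    have h3 : N (y + z) - N z ≤ N y := le_N y _ (fun b₁ => by linarith [h2 b₁])
    linarith
  set f : E →ₗ.[ℝ] ℝ := LinearPMap.mkSpanSingleton x ‖x‖ hx with hf
  have hfd : f.domain = Submodule.span ℝ {x} := rfl
  have hfle : ∀ z : f.domain, f z ≤ N z := by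
    rintro ⟨z, hz⟩
    obtain ⟨c, hc⟩ := Submodule.mem_span_singleton.1 hz
    have hz' : (⟨z, hz⟩ : f.domain) = ⟨c • x, by rw [hc]; exact hz⟩ :=
      Subtype.ext hc.symm
    rw [hz', LinearPMap.mkSpanSingleton'_apply]
    show c • ‖x‖ ≤ N (c • x)
    rw [smul_eq_mul]
    refine le_N _ _ (fun b => ?_)
    have hk := key c (-b)
    rw [neg_smul, ← sub_eq_add_neg] at hk
    linarith
  obtain ⟨g, hg_eq, hg_le⟩ := exists_extension_of_le_sublinear f N N_hom N_add hfle
  have hg_bound : ∀ y : E, |g y| ≤ ‖y‖ := by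
    intro y
    rw [abs_le]
    constructor
    · have := (hg_le (-y)).trans (N_le_norm (-y))
      rw [map_neg, norm_neg] at this
      linarith
    · exact (hg_le y).trans (N_le_norm y)
  have hgx : g x = ‖x‖ := by
    have hm : x ∈ f.domain := by rw [hfd]; exact Submodule.mem_span_singleton_self x
    have := hg_eq ⟨x, hm⟩
    rw [this]
    exact LinearPMap.mkSpanSingleton_apply ℝ ℝ hx ‖x‖
  have hgd : g d = s := by
    have h1 : g d ≤ s := by
      have := (hg_le d).trans (N_le d 1)
      simpa using this
    have h2 : -(g d) ≤ -s := by
      have := (hg_le (-d)).trans (N_le (-d) (-1))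
      rw [map_neg] at this
      have he : -d - (-1 : ℝ) • d = 0 := by rw [neg_smul, one_smul]; abel
      rw [he] at this
      simpa using this
    linarith
  refine ⟨LinearMap.mkContinuous g 1 (fun y => by
    rw [Real.norm_eq_abs, one_mul]; exact hg_bound y), ⟨?_, ?_⟩, ?_⟩
  · intro y hy
    rw [LinearMap.mkContinuous_apply]
    rw [← hy]
    exact hg_bound y
  · rw [LinearMap.mkContinuous_apply, map_smul, smul_eq_mul, hgx,
      inv_mul_cancel₀ (norm_ne_zero_iff.2 hx)]
  · rw [LinearMap.mkContinuous_apply]; exact hgd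

lemma support_apply_eq (x : E) (hx : x ≠ 0) {φ : E →L[ℝ] ℝ}
    (hφ : IsSupportFunctional φ (‖x‖⁻¹ • x)) : φ x = ‖x‖ := by
  have h := hφ.2
  rw [map_smul, smul_eq_mul] at h
  have hn : ‖x‖ ≠ 0 := norm_ne_zero_iff.2 hx
  field_simp at h
  linarith

lemma support_apply_le (x : E) (hx : x ≠ 0) {φ : E →L[ℝ] ℝ}
    (hφ : IsSupportFunctional φ (‖x‖⁻¹ • x)) (y : E) : φ y ≤ ‖y‖ := by
  rcases eq_or_ne y 0 with rfl | hy
  · simp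
  · have hn : ‖y‖ ≠ 0 := norm_ne_zero_iff.2 hy
    have h := hφ.1 (‖y‖⁻¹ • y) (by
      rw [norm_smul, Real.norm_eq_abs, abs_inv, abs_norm]
      field_simp)
    rw [map_smul, smul_eq_mul, abs_mul, abs_inv, abs_norm] at h
    have hpos : (0:ℝ) < ‖y‖ := lt_of_le_of_ne (norm_nonneg y) (Ne.symm hn)
    have h2 : |φ y| ≤ ‖y‖ := by
      have := mul_le_mul_of_nonneg_left h (norm_nonneg y)
      rw [← mul_assoc, mul_inv_cancel₀ hn, one_mul, mul_one] at this
      exact this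
    linarith [le_abs_self (φ y)]

lemma support_le_Q (x d : E) (hx : x ≠ 0) {φ : E →L[ℝ] ℝ}
    (hφ : IsSupportFunctional φ (‖x‖⁻¹ • x)) {t : ℝ} (ht : 0 < t) :
    φ d ≤ Q x d t := by
  have h1 : ‖x‖ + t * φ d ≤ ‖x + t • d‖ := by
    have h := support_apply_le x hx hφ (x + t • d)
    rw [map_add, map_smul, smul_eq_mul, support_apply_eq x hx hφ] at h
    linarith
  have h2 := mul_Q x d (ne_of_gt ht)
  nlinarith

lemma Q_le_support (x d : E) (hx : x ≠ 0) {φ : E →L[ℝ] ℝ}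
    (hφ : IsSupportFunctional φ (‖x‖⁻¹ • x)) {t : ℝ} (ht : t < 0) :
    Q x d t ≤ φ d := by
  have h1 : ‖x‖ + t * φ d ≤ ‖x + t • d‖ := by
    have h := support_apply_le x hx hφ (x + t • d)
    rw [map_add, map_smul, smul_eq_mul, support_apply_eq x hx hφ] at h
    linarith
  have h2 := mul_Q x d (ne_of_lt ht)
  nlinarith

lemma smooth_rP_eq (x d : E) (hx : x ≠ 0) (hsm : NormSmoothAt (‖x‖⁻¹ • x))
    {φ : E →L[ℝ] ℝ} (hφ : IsSupportFunctional φ (‖x‖⁻¹ • x)) :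
    φ d = rP x d ∧ φ d = rM x d := by
  obtain ⟨φ₀, hφ₀, huniq⟩ := hsm
  obtain ⟨gP, hgP, hgPd⟩ := exists_support_functional x d hx
    (key_full x d (abs_rP_le x d) (pt_rP x d))
  obtain ⟨gM, hgM, hgMd⟩ := exists_support_functional x d hx
    (key_full x d (abs_rM_le x d) (pt_rM x d))
  have e1 : gP = φ₀ := huniq _ hgP
  have e2 : gM = φ₀ := huniq _ hgM
  have e3 : φ = φ₀ := huniq _ hφ
  constructor
  · rw [e3, ← e1]; exact hgPd
  · rw [e3, ← e2]; exact hgMd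

lemma tendsto_Q (x d : E) (hx : x ≠ 0) (hsm : NormSmoothAt (‖x‖⁻¹ • x))
    {φ : E →L[ℝ] ℝ} (hφ : IsSupportFunctional φ (‖x‖⁻¹ • x)) :
    Filter.Tendsto (Q x d) (𝓝[≠] (0 : ℝ)) (𝓝 (φ d)) := by
  obtain ⟨hP, hM⟩ := smooth_rP_eq x d hx hsm hφ
  set r := φ d with hr
  rw [Metric.tendsto_nhdsWithin_nhds]
  intro ε hε
  have h1 : sInf (Q x d '' Set.Ioi 0) < r + ε := by
    have : rP x d < r + ε := by rw [← hP]; linarith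
    exact this
  obtain ⟨qP, hqP, hqPlt⟩ := exists_lt_of_csInf_lt (ne_QIoi x d) h1
  obtain ⟨tP, htP, rfl⟩ := hqP
  have h2 : r - ε < sSup (Q x d '' Set.Iio 0) := by
    have : r - ε < rM x d := by rw [← hM]; linarith
    exact this
  obtain ⟨qM, hqM, hqMlt⟩ := exists_lt_of_lt_csSup (ne_QIio x d) h2
  obtain ⟨tM, htM, rfl⟩ := hqM
  rw [Set.mem_Ioi] at htP
  rw [Set.mem_Iio] at htM
  refine ⟨min tP (-tM), lt_min htP (by linarith), ?_⟩
  intro t ht hdist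
  rw [Set.mem_compl_iff, Set.mem_singleton_iff] at ht
  rw [Real.dist_eq, sub_zero] at hdist
  rw [Real.dist_eq]
  rcases lt_or_gt_of_ne ht with hneg | hpos
  · have hlow : Q x d tM ≤ Q x d t := by
      refine Q_mono x d (ne_of_lt htM) ht ?_
      have : |t| < -tM := lt_of_lt_of_le hdist (min_le_right _ _)
      rw [abs_of_neg hneg] at this
      linarith
    have hup : Q x d t ≤ r := by rw [hP]; exact le_rP x d hneg
    rw [abs_lt]; constructor <;> linarith
  · have hup : Q x d t ≤ Q x d tP := by
      refine Q_mono x d ht (ne_of_gt htP) ?_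
      have : |t| < tP := lt_of_lt_of_le hdist (min_le_left _ _)
      rw [abs_of_pos hpos] at this
      linarith
    have hlow : r ≤ Q x d t := by rw [hM]; exact rM_le x d hpos
    rw [abs_lt]; constructor <;> linarith

/-- Auxiliary notion of a rigidity matrix with recorded data. -/
def GoodMatrix {W : Type*} (G : SimpleGraph W) (q : W → E)
    (R : (W → E) →ₗ[ℝ] (G.edgeSet → ℝ)) : Prop :=
  ∀ e : G.edgeSet, ∃ v w : W, (e : Sym2 W) = s(v, w) ∧ ∃ φ : E →L[ℝ] ℝ,
    IsSupportFunctional φ (‖q v - q w‖⁻¹ • (q v - q w)) ∧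
    ∀ u : W → E, R u e = φ (u v - u w)

lemma exists_goodMatrix {W : Type*} (G : SimpleGraph W) (q : W → E)
    (hwp : WellPositioned G q) :
    ∃ R, GoodMatrix G q R := by
  have hex : ∀ e : G.edgeSet, ∃ t : W × W × (E →L[ℝ] ℝ),
      (e : Sym2 W) = s(t.1, t.2.1) ∧
      IsSupportFunctional t.2.2 (‖q t.1 - q t.2.1‖⁻¹ • (q t.1 - q t.2.1)) := by
    rintro ⟨e, he⟩
    revert he
    refine Sym2.ind (fun v w => ?_) e
    intro he
    have hadj : G.Adj v w := G.mem_edgeSet.mp he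
    obtain ⟨φ, hφ, -⟩ := hwp hadj
    exact ⟨(v, w, φ), rfl, hφ⟩
  choose t ht1 ht2 using hex
  refine ⟨{ toFun := fun u e => (t e).2.2 (u (t e).1 - u (t e).2.1)
            map_add' := ?_
            map_smul' := ?_ }, ?_⟩
  · intro u₁ u₂
    funext e
    have : (u₁ + u₂) (t e).1 - (u₁ + u₂) (t e).2.1
        = (u₁ (t e).1 - u₁ (t e).2.1) + (u₂ (t e).1 - u₂ (t e).2.1) := by
      simp only [Pi.add_apply]; abel
    simp [this]; ring
  · intro c u
    funext e
    have : (c • u) (t e).1 - (c • u) (t e).2.1 = c • (u (t e).1 - u (t e).2.1) := by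
      simp only [Pi.smul_apply]; rw [smul_sub]
    simp [this]; ring
  · intro e
    exact ⟨(t e).1, (t e).2.1, ht1 e, (t e).2.2, ht2 e, fun u => rfl⟩

lemma isInfFlex_iff {W : Type*} {G : SimpleGraph W} {q : W → E}
    {R : (W → E) →ₗ[ℝ] (G.edgeSet → ℝ)}
    (hwp : WellPositioned G q) (hq : ∀ ⦃v w : W⦄, G.Adj v w → q v ≠ q w)
    (hR : GoodMatrix G q R) (u : W → E) :
    IsInfFlex G q u ↔ R u = 0 := by
  have key : ∀ e : G.edgeSet,
      Filter.Tendsto (fun t : ℝ => (t⁻¹ • (rigidityMap G (q + t • u) - rigidityMap G q)) e)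
        (𝓝[≠] (0 : ℝ)) (𝓝 (R u e)) := by
    intro e
    obtain ⟨v, w, hvw, φ, hφ, hRe⟩ := hR e
    have hadj : G.Adj v w := G.mem_edgeSet.mp (by rw [← hvw]; exact e.2)
    have hx : q v - q w ≠ 0 := sub_ne_zero.mpr (hq hadj)
    have h1 : (fun t : ℝ => (t⁻¹ • (rigidityMap G (q + t • u) - rigidityMap G q)) e)
        = Q (q v - q w) (u v - u w) := by
      funext t
      simp only [Pi.smul_apply, Pi.sub_apply, smul_eq_mul, rigidityMap, hvw, Sym2.lift_mk, Q]
      congr 2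
      simp only [Pi.add_apply, Pi.smul_apply]
      rw [smul_sub]
      abel
    rw [h1, hRe u]
    exact tendsto_Q (q v - q w) (u v - u w) hx (hwp hadj) hφ
  constructor
  · intro hflex
    funext e
    have h1 := (tendsto_pi_nhds.1 hflex) e
    have h2 : R u e = (0 : G.edgeSet → ℝ) e := tendsto_nhds_unique (key e) h1
    simpa using h2
  · intro h0
    show Filter.Tendsto _ _ _
    rw [tendsto_pi_nhds]
    intro e
    have h1 := key e
    rw [h0] at h1
    simpa using h1

lemma neg_support {x₀ : E} {φ : E →L[ℝ] ℝ} (hφ : IsSupportFunctional φ x₀) :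
    IsSupportFunctional (-φ) (-x₀) := by
  constructor
  · intro y hy
    have := hφ.1 y hy
    simp only [ContinuousLinearMap.neg_apply, abs_neg]
    exact this
  · simp only [ContinuousLinearMap.neg_apply, map_neg, hφ.2, neg_neg]

lemma unit_neg (x y : E) : ‖y - x‖⁻¹ • (y - x) = -(‖x - y‖⁻¹ • (x - y)) := by
  rw [norm_sub_rev, ← smul_neg, neg_sub]

lemma goodMatrix_entry_eq {W W' : Type*} {G : SimpleGraph W} {q : W → E}
    {R : (W → E) →ₗ[ℝ] (G.edgeSet → ℝ)}
    (hwp : WellPositioned G q) (hR : GoodMatrix G q R)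
    {G' : SimpleGraph W'} {q' : W' → E} {R' : (W' → E) →ₗ[ℝ] (G'.edgeSet → ℝ)}
    (hR' : GoodMatrix G' q' R')
    (f : W' → W) (hqf : ∀ a, q' a = q (f a))
    (e' : G'.edgeSet) (e : G.edgeSet) (he : (e : Sym2 W) = Sym2.map f (e' : Sym2 W'))
    (u : W → E) : R u e = R' (fun a => u (f a)) e' := by
  obtain ⟨v, w, hvw, φ, hφ, hRe⟩ := hR e
  obtain ⟨a, b, hab, ψ, hψ, hRe'⟩ := hR' e'
  have hadj : G.Adj v w := G.mem_edgeSet.mp (by rw [← hvw]; exact e.2)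
  have hsm := hwp hadj
  have hmapeq : s(v, w) = s(f a, f b) := by
    rw [← hvw, he, hab, Sym2.map_pair_eq]
  rw [hRe u, hRe' (fun a => u (f a))]
  have hψ' : IsSupportFunctional ψ (‖q (f a) - q (f b)‖⁻¹ • (q (f a) - q (f b))) := by
    rwa [← hqf a, ← hqf b]
  rcases Sym2.eq_iff.mp hmapeq with ⟨h1, h2⟩ | ⟨h1, h2⟩
  · subst h1; subst h2
    obtain ⟨φ₀, -, huniq⟩ := hsm
    rw [show φ = ψ from (huniq _ hφ).trans (huniq _ hψ').symm]
  · subst h1; subst h2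
    have hψ'' : IsSupportFunctional (-ψ) (‖q (f b) - q (f a)‖⁻¹ • (q (f b) - q (f a))) := by
      have := neg_support hψ'
      rwa [← unit_neg (q (f a)) (q (f b))] at this
    obtain ⟨φ₀, -, huniq⟩ := hsm
    rw [show φ = -ψ from (huniq _ hφ).trans (huniq _ hψ'').symm]
    simp only [ContinuousLinearMap.neg_apply]
    rw [← map_neg, neg_sub]

lemma surjective_of_isostatic {W : Type*} [Fintype W] [DecidableEq W]
    {G : SimpleGraph W} {p : W → E}
    (hp : Function.Injective p) (hwp : WellPositioned G p) (hiso : Isostatic G p)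
    {R : (W → E) →ₗ[ℝ] (G.edgeSet → ℝ)} (hR : GoodMatrix G p R) :
    Function.Surjective R := by
  classical
  haveI : Fintype ↥G.edgeSet := Fintype.ofFinite _
  have hqG : ∀ ⦃v w : W⦄, G.Adj v w → p v ≠ p w := fun v w h hh => h.ne (hp hh)
  by_contra hns
  have hlt : LinearMap.range R < ⊤ :=
    lt_top_iff_ne_top.2 (fun h => hns (LinearMap.range_eq_top.1 h))
  obtain ⟨f, hf0, hfker⟩ := Submodule.exists_le_ker_of_lt_top _ hlt
  obtain ⟨e₀, he₀⟩ : ∃ e : G.edgeSet, f (fun j => if e = j then (1:ℝ) else 0) ≠ 0 := by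
    by_contra hall
    push_neg at hall
    refine hf0 (LinearMap.ext fun y => ?_)
    rw [LinearMap.pi_apply_eq_sum_univ]
    simp [hall]
  set G₂ := G.deleteEdges {(e₀ : Sym2 W)} with hG₂
  have hadj₂ : ∀ ⦃v w : W⦄, G₂.Adj v w → G.Adj v w := by
    intro v w h
    exact (SimpleGraph.deleteEdges_adj.mp h).1
  have hwp₂ : WellPositioned G₂ p := fun v w h => hwp (hadj₂ h)
  have hq₂ : ∀ ⦃v w : W⦄, G₂.Adj v w → p v ≠ p w := fun v w h => hqG (hadj₂ h)
  obtain ⟨R₂, hR₂⟩ := exists_goodMatrix G₂ p hwp₂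
  have hrig : InfRigid G₂ p := by
    intro u hu
    have h₂0 : R₂ u = 0 := (isInfFlex_iff hwp₂ hq₂ hR₂ u).1 hu
    have hRu : ∀ e : G.edgeSet, e ≠ e₀ → R u e = 0 := by
      intro e hne
      have he₂ : (e : Sym2 W) ∈ G₂.edgeSet := by
        rw [hG₂, SimpleGraph.edgeSet_deleteEdges]
        refine ⟨e.2, ?_⟩
        simp only [Set.mem_singleton_iff]
        intro hc
        exact hne (Subtype.ext hc)
      have hentry := goodMatrix_entry_eq hwp hR hR₂ (fun a => a) (fun a => rfl)
        (⟨(e : Sym2 W), he₂⟩ : G₂.edgeSet) e (by simp [Sym2.map_id']) u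
      rw [hentry]
      have : (fun a => u a) = u := rfl
      rw [this, h₂0]
      rfl
    have hRu0 : R u = 0 := by
      have hfRu : f (R u) = 0 := hfker (LinearMap.mem_range_self R u)
      rw [LinearMap.pi_apply_eq_sum_univ] at hfRu
      rw [Finset.sum_eq_single e₀ (fun e _ hne => by rw [hRu e hne, zero_smul])
        (fun h => absurd (Finset.mem_univ e₀) h)] at hfRu
      have he0 : R u e₀ = 0 := by
        rcases smul_eq_zero.mp hfRu with h | h
        · exact h
        · exact absurd h he₀
      funext e
      by_cases he : e = e₀
      · rw [he]; exact he0
      · exact hRu e he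
    have hflexG : IsInfFlex G p u := (isInfFlex_iff hwp hqG hR u).2 hRu0
    obtain ⟨-, α, hα, huα⟩ := hiso.1 u hflexG
    exact ⟨hu, α, hα, huα⟩
  exact (hiso.2 (e₀ : Sym2 W) e₀.2) hrig

end MaxAux

/-- Subgraph Maxwell count for isostatic well-positioned frameworks:
`|E(H)| ≤ dim X ⬝ |V(H)| - d` where `d` is the dimension of the span of the trivial
infinitesimal flexes of the subframework `(H, p|_{V(H)})`. -/
theorem maxwell_count_subgraph_of_isostatic
    {X : Type*} [NormedAddCommGroup X] [NormedSpace ℝ X] [FiniteDimensional ℝ X]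
    {V : Type*} [Fintype V] [DecidableEq V]
    (G : SimpleGraph V) (p : V → X) (hp : Function.Injective p)
    (hwp : WellPositioned G p) (hiso : Isostatic G p) (H : G.Subgraph) :
    Nat.card ↥H.coe.edgeSet +
        Module.finrank ℝ
          ↥(Submodule.span ℝ (trivialFlexes H.coe (fun v : ↥H.verts => p ↑v))) ≤
      Module.finrank ℝ X * Nat.card ↥H.verts := by
  classical
  haveI : Fintype ↥H.verts := Fintype.ofFinite _
  haveI : Fintype ↥H.coe.edgeSet := Fintype.ofFinite _
  set q : ↥H.verts → X := fun v : ↥H.verts => p ↑v with hq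
  have hqG : ∀ ⦃v w : V⦄, G.Adj v w → p v ≠ p w := fun v w h hh => h.ne (hp hh)
  have hwp' : WellPositioned H.coe q := by
    intro a b hab
    exact hwp (H.coe_adj_sub a b hab)
  have hq' : ∀ ⦃a b : ↥H.verts⦄, H.coe.Adj a b → q a ≠ q b :=
    fun a b h hh => h.ne (Subtype.ext (hp hh))
  obtain ⟨R, hR⟩ := MaxAux.exists_goodMatrix G p hwp
  obtain ⟨R', hR'⟩ := MaxAux.exists_goodMatrix H.coe q hwp'
  have hsurjR := MaxAux.surjective_of_isostatic hp hwp hiso hR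
  have hmem : ∀ e : H.coe.edgeSet, Sym2.map (Subtype.val) (e : Sym2 ↥H.verts) ∈ G.edgeSet := by
    rintro ⟨e, he⟩
    revert he
    refine Sym2.ind (fun a b => ?_) e
    intro he
    rw [Sym2.map_pair_eq, SimpleGraph.mem_edgeSet]
    exact H.coe_adj_sub a b (H.coe.mem_edgeSet.1 he)
  set ι : H.coe.edgeSet → G.edgeSet := fun e => ⟨Sym2.map Subtype.val e.1, hmem e⟩ with hι
  have hι_inj : Function.Injective ι := by
    intro e₁ e₂ h
    apply Subtype.ext
    have h2 := congrArg Subtype.val h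
    exact Sym2.map.injective Subtype.val_injective h2
  have hentry : ∀ (u : V → X) (e : H.coe.edgeSet), R u (ι e) = R' (fun a => u ↑a) e :=
    fun u e => MaxAux.goodMatrix_entry_eq hwp hR hR' Subtype.val (fun a => rfl) e (ι e) rfl u
  have hsurjR' : Function.Surjective R' := by
    intro y
    obtain ⟨u, hu⟩ := hsurjR (fun f => if h : ∃ e, ι e = f then y h.choose else 0)
    refine ⟨fun a => u ↑a, funext fun e => ?_⟩
    have h1 : R' (fun a => u ↑a) e = R u (ι e) := (hentry u e).symm
    rw [h1, hu]
    have hex : ∃ e', ι e' = ι e := ⟨e, rfl⟩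
    simp only [dif_pos hex]
    exact congrArg y (hι_inj hex.choose_spec)
  have hker : Submodule.span ℝ (trivialFlexes H.coe q) ≤ LinearMap.ker R' := by
    rw [Submodule.span_le]
    intro u hu
    exact LinearMap.mem_ker.2 ((MaxAux.isInfFlex_iff hwp' hq' hR' u).1 hu.1)
  have h1 : Module.finrank ℝ ↥(Submodule.span ℝ (trivialFlexes H.coe q)) ≤
      Module.finrank ℝ ↥(LinearMap.ker R') := Submodule.finrank_mono hker
  have h2 := LinearMap.finrank_range_add_finrank_ker R'
  have h3 : LinearMap.range R' = ⊤ := LinearMap.range_eq_top.2 hsurjR'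
  have h4 : Module.finrank ℝ ↥(LinearMap.range R') = Fintype.card ↥H.coe.edgeSet := by
    rw [h3, finrank_top, Module.finrank_fintype_fun_eq_card]
  have h5 : Module.finrank ℝ (↥H.verts → X) = Fintype.card ↥H.verts * Module.finrank ℝ X := by
    rw [Module.finrank_pi_fintype ℝ, Finset.sum_const, Finset.card_univ, smul_eq_mul]
  rw [Nat.card_eq_fintype_card, Nat.card_eq_fintype_card]
  calc Fintype.card ↥H.coe.edgeSet +
        Module.finrank ℝ ↥(Submodule.span ℝ (trivialFlexes H.coe q))
      ≤ Fintype.card ↥H.coe.edgeSet + Module.finrank ℝ ↥(LinearMap.ker R') :=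
        Nat.add_le_add_left h1 _
    _ = Module.finrank ℝ ↥(LinearMap.range R') + Module.finrank ℝ ↥(LinearMap.ker R') := by
        rw [h4]
    _ = Module.finrank ℝ (↥H.verts → X) := h2
    _ = Module.finrank ℝ X * Fintype.card ↥H.verts := by rw [h5, mul_comm]
end
end

section
/- Let (G,p) be a well-positioned bar-joint framework in a finite-dimensional real normed vector space (X,‖·‖) which is Γ-symmetric with respect to an action θ : Γ → Aut(G) and a representation τ : Γ → GL(X) by linear isometries. Then the rigidity matrix is Γ-linear with respect to τ⊗P_V and P_E: for every γ ∈ Γ, R(G,p) ∘ (τ⊗P_V)(γ) = P_E(γ) ∘ R(G,p). -/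
open scoped Topology

noncomputable section

variable {X : Type*} [NormedAddCommGroup X] [NormedSpace ℝ X]

variable {V : Type*}

/-- The rigidity matrix of a `Γ`-symmetric well-positioned framework
intertwines `τ ⊗ P_V` and `P_E`: `R(G,p) ∘ (τ ⊗ P_V)(γ) = P_E(γ) ∘ R(G,p)`. -/
theorem rigidityMatrix_intertwines
    {X : Type*} [NormedAddCommGroup X] [NormedSpace ℝ X] [FiniteDimensional ℝ X]
    {V : Type*} [Fintype V] [DecidableEq V] {Γ : Type*} [Group Γ]
    (G : SimpleGraph V) (p : V → X) (hp : Function.Injective p)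
    (θ : Γ →* Equiv.Perm V) (τ : Γ →* (X ≃ₗ[ℝ] X))
    (hθ : IsGraphAction G θ) (hτ : IsIsometricRep τ)
    (hsym : IsSymmetricFramework G p θ τ) (hwp : WellPositioned G p) :
    ∀ R : (V → X) →ₗ[ℝ] (↥G.edgeSet → ℝ), IsRigidityMatrix G p R →
      ∀ (γ : Γ) (u : V → X) (v w : V) (h : G.Adj v w),
        R (tauPV (τ γ) (θ γ) u) ⟨s(v, w), (G.mem_edgeSet).mpr h⟩ =
          R u ⟨s(θ γ⁻¹ v, θ γ⁻¹ w), (G.mem_edgeSet).mpr ((hθ γ⁻¹ v w).mp h)⟩ := by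
  intro R hR γ u v w h
  set v' := θ γ⁻¹ v with hv'
  set w' := θ γ⁻¹ w with hw'
  have h' : G.Adj v' w' := (hθ γ⁻¹ v w).mp h
  obtain ⟨φ, hφ, hφR⟩ := hR h
  obtain ⟨φ', hφ', hφ'R⟩ := hR h'
  have hτγ : ∀ x : X, ‖(τ γ) x‖ = ‖x‖ := hτ γ
  set T : X →L[ℝ] X := LinearMap.toContinuousLinearMap ((τ γ : X ≃ₗ[ℝ] X) : X →ₗ[ℝ] X)
    with hT
  have hTx : ∀ x : X, T x = (τ γ) x := fun x => rfl
  set ψ : X →L[ℝ] ℝ := φ.comp T with hψdef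
  have hpv : (τ γ) (p v') = p v := by
    rw [hv', hsym γ (θ γ⁻¹ v)]
    rw [← Equiv.Perm.mul_apply, ← map_mul]
    simp
  have hpw : (τ γ) (p w') = p w := by
    rw [hw', hsym γ (θ γ⁻¹ w)]
    rw [← Equiv.Perm.mul_apply, ← map_mul]
    simp
  have hnorm : ‖p v' - p w'‖ = ‖p v - p w‖ := by
    rw [← hτγ (p v' - p w'), map_sub, hpv, hpw]
  have hψsupp : IsSupportFunctional ψ (‖p v' - p w'‖⁻¹ • (p v' - p w')) := by
    constructor
    · intro x hx
      exact hφ.1 ((τ γ) x) (by rw [hτγ]; exact hx)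
    · show φ (T (‖p v' - p w'‖⁻¹ • (p v' - p w'))) = 1
      rw [hTx, map_smul, map_sub, hpv, hpw, hnorm]
      exact hφ.2
  obtain ⟨f, hf, hfuniq⟩ := hwp h'
  have hψφ' : ψ = φ' := by
    rw [hfuniq ψ hψsupp, hfuniq φ' hφ']
  rw [hφR, hφ'R, ← hψφ']
  show φ ((tauPV (τ γ) (θ γ) u) v - (tauPV (τ γ) (θ γ) u) w) = φ (T (u v' - u w'))
  have hinv : ∀ x : V, (θ γ)⁻¹ x = θ γ⁻¹ x := fun x => by rw [← map_inv]
  simp only [tauPV, LinearMap.coe_mk, AddHom.coe_mk, hinv, hTx, ← hv', ← hw', ← map_sub]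

end
end

section
/- Let Γ be a finite group and let (G,p) be a well-positioned bar-joint framework in a finite-dimensional real normed vector space (X,‖·‖) which is Γ-symmetric with respect to θ and τ. If (G,p) is isostatic, then T(G,p) = ker R(G,p) is a (τ⊗P_V)-invariant linear subspace of X^V and for every γ ∈ Γ: tr(P_E(γ)) = tr((τ⊗P_V)(γ)) − tr of the restriction of (τ⊗P_V)(γ) to T(G,p). Equivalently, the character of P_E equals the character of τ⊗P_V minus the character of the subrepresentation of τ⊗P_V on T(G,p). -/
open scoped Topology

noncomputable section

variable {X : Type*} [NormedAddCommGroup X] [NormedSpace ℝ X]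

variable {V : Type*}

section MaxwellAux
open Filter Set

namespace MaxAux

/-- difference quotient of the norm at `x` in direction `y`. -/
def nslope (x y : X) (t : ℝ) : ℝ := t⁻¹ * (‖x + t • y‖ - ‖x‖)

lemma nslope_mono (x y : X) : MonotoneOn (nslope x y) (Ioi (0:ℝ)) := by
  intro s hs t ht hst
  have hs0 : (0:ℝ) < s := hs
  have ht0 : (0:ℝ) < t := ht
  set r : ℝ := s / t with hr
  have hrt : r * t = s := div_mul_cancel₀ s ht0.ne'
  have hr0 : 0 < r := div_pos hs0 ht0
  have hr1 : r ≤ 1 := (div_le_one ht0).2 hst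
  have hdecomp : x + s • y = (1 - r) • x + r • (x + t • y) := by
    rw [smul_add, smul_smul, hrt, sub_smul, one_smul]
    abel
  have hnorm : ‖x + s • y‖ ≤ (1 - r) * ‖x‖ + r * ‖x + t • y‖ := by
    rw [hdecomp]
    calc ‖(1 - r) • x + r • (x + t • y)‖ ≤ ‖(1-r) • x‖ + ‖r • (x + t • y)‖ := norm_add_le _ _
    _ = (1 - r) * ‖x‖ + r * ‖x + t • y‖ := by
        rw [norm_smul, norm_smul, Real.norm_eq_abs, Real.norm_eq_abs,
          abs_of_nonneg (by linarith), abs_of_nonneg hr0.le]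
  have : nslope x y s ≤ s⁻¹ * (r * (‖x + t • y‖ - ‖x‖)) := by
    unfold nslope
    have : ‖x + s • y‖ - ‖x‖ ≤ r * (‖x + t • y‖ - ‖x‖) := by nlinarith
    exact mul_le_mul_of_nonneg_left this (inv_nonneg.2 hs0.le)
  refine this.trans (le_of_eq ?_)
  unfold nslope
  rw [hr]
  field_simp

lemma neg_norm_le_nslope (x y : X) {t : ℝ} (ht : 0 < t) : -‖y‖ ≤ nslope x y t := by
  unfold nslope
  have h1 : ‖x‖ - t * ‖y‖ ≤ ‖x + t • y‖ := by
    have := norm_add_le (x + t • y) (-(t • y))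
    simp only [add_neg_cancel_right, norm_neg, norm_smul, Real.norm_eq_abs,
      abs_of_nonneg ht.le] at this
    linarith
  rw [neg_le, ← mul_neg]
  have h2 : -(‖x + t • y‖ - ‖x‖) ≤ t * ‖y‖ := by linarith
  calc t⁻¹ * -(‖x + t • y‖ - ‖x‖) ≤ t⁻¹ * (t * ‖y‖) :=
        mul_le_mul_of_nonneg_left h2 (inv_nonneg.2 ht.le)
  _ = ‖y‖ := by field_simp

lemma nslope_le_norm (x y : X) {t : ℝ} (ht : 0 < t) : nslope x y t ≤ ‖y‖ := by
  unfold nslope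
  have h1 : ‖x + t • y‖ ≤ ‖x‖ + t * ‖y‖ := by
    have := norm_add_le x (t • y)
    simpa [norm_smul, abs_of_nonneg ht.le] using this
  have h2 : ‖x + t • y‖ - ‖x‖ ≤ t * ‖y‖ := by linarith
  calc t⁻¹ * (‖x + t • y‖ - ‖x‖) ≤ t⁻¹ * (t * ‖y‖) :=
        mul_le_mul_of_nonneg_left h2 (inv_nonneg.2 ht.le)
  _ = ‖y‖ := by field_simp

/-- The one-sided (Gateaux) derivative of the norm at `x` in direction `y`. -/
def gder (x y : X) : ℝ := sInf (nslope x y '' Ioi (0:ℝ))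

lemma bddBelow_nslope (x y : X) : BddBelow (nslope x y '' Ioi (0:ℝ)) :=
  ⟨-‖y‖, by rintro _ ⟨t, ht, rfl⟩; exact neg_norm_le_nslope x y ht⟩

lemma tendsto_nslope (x y : X) :
    Tendsto (nslope x y) (𝓝[>] (0:ℝ)) (𝓝 (gder x y)) :=
  (nslope_mono x y).tendsto_nhdsGT (bddBelow_nslope x y)

lemma gder_le_norm (x y : X) : gder x y ≤ ‖y‖ :=
  csInf_le_of_le (bddBelow_nslope x y) ⟨1, by norm_num, rfl⟩ (nslope_le_norm x y one_pos)


lemma gder_smul (x y : X) {c : ℝ} (hc : 0 < c) : gder x (c • y) = c * gder x y := by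
  have h1 : Tendsto (fun t : ℝ => c * t) (𝓝[>] (0:ℝ)) (𝓝[>] (0:ℝ)) := by
    refine tendsto_nhdsWithin_of_tendsto_nhds_of_eventually_within _ ?_ ?_
    · have h : Tendsto (fun t : ℝ => c * t) (𝓝 (0:ℝ)) (𝓝 (0:ℝ)) := by
        simpa using (tendsto_id.const_mul c : Tendsto (fun t : ℝ => c * t) (𝓝 0) (𝓝 (c * 0)))
      exact h.mono_left nhdsWithin_le_nhds
    · exact eventually_nhdsWithin_of_forall fun t ht => mul_pos hc ht
  have h2 : Tendsto (fun t : ℝ => c * nslope x y (c * t)) (𝓝[>] (0:ℝ))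
      (𝓝 (c * gder x y)) := (((tendsto_nslope x y).comp h1).const_mul c)
  have h3 : ∀ t : ℝ, t ∈ Ioi (0:ℝ) → nslope x (c • y) t = c * nslope x y (c * t) := by
    intro t ht
    unfold nslope
    rw [smul_smul]
    have ht0 : (t:ℝ) ≠ 0 := (LT.lt.ne' ht)
    field_simp
  have h4 : Tendsto (nslope x (c • y)) (𝓝[>] (0:ℝ)) (𝓝 (c * gder x y)) :=
    h2.congr' ((eventually_nhdsWithin_of_forall h3).mono fun t ht => ht.symm)
  exact tendsto_nhds_unique (tendsto_nslope x (c • y)) h4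

lemma gder_add_le (x y z : X) : gder x (y + z) ≤ gder x y + gder x z := by
  have h1 : Tendsto (fun t : ℝ => 2 * t) (𝓝[>] (0:ℝ)) (𝓝[>] (0:ℝ)) := by
    refine tendsto_nhdsWithin_of_tendsto_nhds_of_eventually_within _ ?_ ?_
    · have h : Tendsto (fun t : ℝ => 2 * t) (𝓝 (0:ℝ)) (𝓝 (0:ℝ)) := by
        simpa using (tendsto_id.const_mul 2 : Tendsto (fun t : ℝ => 2 * t) (𝓝 0) (𝓝 (2 * 0)))
      exact h.mono_left nhdsWithin_le_nhds
    · exact eventually_nhdsWithin_of_forall fun t ht => Set.mem_Ioi.2 (mul_pos two_pos ht)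
  have h2 : Tendsto (fun t : ℝ => nslope x y (2*t) + nslope x z (2*t)) (𝓝[>] (0:ℝ))
      (𝓝 (gder x y + gder x z)) :=
    ((tendsto_nslope x y).comp h1).add ((tendsto_nslope x z).comp h1)
  refine le_of_tendsto_of_tendsto (tendsto_nslope x (y+z)) h2 ?_
  filter_upwards [self_mem_nhdsWithin] with t ht
  have ht0 : (0:ℝ) < t := ht
  have key : ‖x + t • (y + z)‖ ≤ (‖x + (2*t) • y‖ + ‖x + (2*t) • z‖) / 2 := by
    have : x + t • (y + z) = (2:ℝ)⁻¹ • ((x + (2*t) • y) + (x + (2*t) • z)) := by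
      rw [smul_add]
      match_scalars <;> ring
    rw [this, norm_smul, Real.norm_eq_abs, abs_of_pos (by norm_num : (0:ℝ) < 2⁻¹),
      div_eq_inv_mul]
    exact mul_le_mul_of_nonneg_left (norm_add_le _ _) (by norm_num)
  show nslope x (y+z) t ≤ nslope x y (2*t) + nslope x z (2*t)
  unfold nslope
  have h2t : (2*t) ≠ 0 := by positivity
  have e1 : (2*t)⁻¹ * (‖x + (2*t) • y‖ - ‖x‖) + (2*t)⁻¹ * (‖x + (2*t) • z‖ - ‖x‖)
      = t⁻¹ * ((‖x + (2*t) • y‖ + ‖x + (2*t) • z‖)/2 - ‖x‖) := by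
    field_simp
    ring
  rw [e1]
  exact mul_le_mul_of_nonneg_left (by linarith) (inv_nonneg.2 ht0.le)

lemma gder_self_unit {x : X} (hx : x ≠ 0) : gder x (‖x‖⁻¹ • x) = 1 := by
  have hnx : (0:ℝ) < ‖x‖ := norm_pos_iff.2 hx
  have h : ∀ t : ℝ, t ∈ Ioi (0:ℝ) → nslope x (‖x‖⁻¹ • x) t = 1 := by
    intro t ht
    have ht0 : (0:ℝ) < t := ht
    unfold nslope
    have : x + t • ‖x‖⁻¹ • x = (1 + t * ‖x‖⁻¹) • x := by
      match_scalars; ring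
    rw [this, norm_smul, Real.norm_eq_abs, abs_of_pos (by positivity)]
    field_simp
    ring
  have h4 : Tendsto (nslope x (‖x‖⁻¹ • x)) (𝓝[>] (0:ℝ)) (𝓝 1) :=
    (tendsto_const_nhds (α := ℝ)).congr'
      (eventually_nhdsWithin_of_forall fun t ht => (h t ht).symm)
  exact tendsto_nhds_unique (tendsto_nslope x _) h4

lemma gder_neg_self_unit {x : X} (hx : x ≠ 0) : gder x (-(‖x‖⁻¹ • x)) = -1 := by
  have hnx : (0:ℝ) < ‖x‖ := norm_pos_iff.2 hx
  have h : ∀ᶠ t in 𝓝[>] (0:ℝ), nslope x (-(‖x‖⁻¹ • x)) t = -1 := by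
    filter_upwards [Ioo_mem_nhdsGT_of_mem (by exact ⟨le_refl _, hnx⟩ : (0:ℝ) ∈ Ico 0 ‖x‖)]
      with t ht
    obtain ⟨ht0, htn⟩ := ht
    unfold nslope
    have : x + t • -(‖x‖⁻¹ • x) = (1 - t * ‖x‖⁻¹) • x := by
      match_scalars; ring
    have hpos : 0 < 1 - t * ‖x‖⁻¹ := by
      have : t * ‖x‖⁻¹ < 1 := by
        rw [← div_eq_mul_inv, div_lt_one hnx]; exact htn
      linarith
    rw [this, norm_smul, Real.norm_eq_abs, abs_of_pos hpos]
    field_simp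
    ring
  have h4 : Tendsto (nslope x (-(‖x‖⁻¹ • x))) (𝓝[>] (0:ℝ)) (𝓝 (-1)) :=
    (tendsto_const_nhds (α := ℝ)).congr' (h.mono fun t ht => ht.symm)
  exact tendsto_nhds_unique (tendsto_nslope x _) h4


lemma gder_zero (x : X) : gder x 0 = 0 := by
  have h4 : Tendsto (nslope x 0) (𝓝[>] (0:ℝ)) (𝓝 0) := by
    refine (tendsto_const_nhds (α := ℝ)).congr' ?_
    exact eventually_nhdsWithin_of_forall fun t ht => by simp [nslope]
  exact tendsto_nhds_unique (tendsto_nslope x 0) h4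

lemma smul_le_gder (x y : X) (c : ℝ) : c * gder x y ≤ gder x (c • y) := by
  rcases lt_trichotomy c 0 with hc | rfl | hc
  · have h1 : gder x (-(c • y)) = (-c) * gder x y := by
      rw [show -(c • y) = (-c) • y by simp]
      exact gder_smul x y (by linarith)
    have h2 : (0:ℝ) ≤ gder x (c • y) + gder x (-(c • y)) := by
      have := gder_add_le x (c • y) (-(c • y))
      simpa [gder_zero] using this
    linarith
  · simp [gder_zero]
  · exact le_of_eq (gder_smul x y hc).symm

lemma abs_gder_le (x y : X) : |gder x y| ≤ ‖y‖ := by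
  rw [abs_le]
  constructor
  · have h2 : (0:ℝ) ≤ gder x y + gder x (-y) := by
      have := gder_add_le x y (-y)
      simpa [gder_zero] using this
    have := gder_le_norm x (-y)
    rw [norm_neg] at this
    linarith
  · exact gder_le_norm x y

lemma gder_eq_support [FiniteDimensional ℝ X] {x : X} (hx : x ≠ 0)
    (hs : NormSmoothAt (‖x‖⁻¹ • x)) {φ : X →L[ℝ] ℝ}
    (hφ : IsSupportFunctional φ (‖x‖⁻¹ • x)) (y : X) : gder x y = φ y := by
  obtain ⟨ψ, hψ, huniq⟩ := hs
  have hφψ : φ = ψ := huniq φ hφ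
  rcases eq_or_ne y 0 with rfl | hy
  · simp [gder_zero]
  -- build a linear functional dominated by `gder x` sending `y` to `gder x y`
  set f : X →ₗ.[ℝ] ℝ := LinearPMap.mkSpanSingleton y (gder x y)
    (fun h => hy (by simpa using h)) with hf
  have hf0 : ∀ z : f.domain, f z ≤ gder x z.1 := by
    rintro ⟨z, hz⟩
    rcases Submodule.mem_span_singleton.1 hz with ⟨c, rfl⟩
    have : f ⟨c • y, hz⟩ = c • gder x y := LinearPMap.mkSpanSingleton'_apply _ _ _ c hz
    rw [this]
    simpa using smul_le_gder x y c
  obtain ⟨g, hg_eq, hg_le⟩ := exists_extension_of_le_sublinear f (gder x)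
    (fun c hc z => gder_smul x z hc) (gder_add_le x) hf0
  have hgy : g y = gder x y := by
    have hmem : y ∈ f.domain := Submodule.mem_span_singleton_self y
    have := hg_eq ⟨y, hmem⟩
    rw [this]
    exact LinearPMap.mkSpanSingleton_apply ℝ ℝ _ _
  set G : X →L[ℝ] ℝ := LinearMap.toContinuousLinearMap g with hG
  have hGapp : ∀ z, G z = g z := fun z => by
    rw [hG, LinearMap.coe_toContinuousLinearMap']
  have hGsupp : IsSupportFunctional G (‖x‖⁻¹ • x) := by
    constructor
    · intro z hz
      rw [hGapp, abs_le]
      constructor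
      · have h1 := hg_le (-z)
        have h2 := gder_le_norm x (-z)
        rw [norm_neg, hz] at h2
        rw [map_neg] at h1
        linarith
      · have h1 := hg_le z
        have h2 := gder_le_norm x z
        rw [hz] at h2
        linarith
    · rw [hGapp]
      have h1 : g (‖x‖⁻¹ • x) ≤ 1 := by
        have := (hg_le (‖x‖⁻¹ • x)).trans (le_of_eq (gder_self_unit hx))
        exact this
      have h2 : g (-(‖x‖⁻¹ • x)) ≤ -1 := by
        have := (hg_le (-(‖x‖⁻¹ • x))).trans (le_of_eq (gder_neg_self_unit hx))
        exact this
      rw [map_neg] at h2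
      linarith
  have hGψ : G = ψ := huniq G hGsupp
  rw [hφψ, ← hGψ, hGapp, hgy]

lemma tendsto_support [FiniteDimensional ℝ X] {x : X} (hx : x ≠ 0)
    (hs : NormSmoothAt (‖x‖⁻¹ • x)) {φ : X →L[ℝ] ℝ}
    (hφ : IsSupportFunctional φ (‖x‖⁻¹ • x)) (y : X) :
    Tendsto (fun t : ℝ => t⁻¹ * (‖x + t • y‖ - ‖x‖)) (𝓝[≠] (0:ℝ)) (𝓝 (φ y)) := by
  have hpos : Tendsto (nslope x y) (𝓝[>] (0:ℝ)) (𝓝 (φ y)) := by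
    have := tendsto_nslope x y
    rwa [gder_eq_support hx hs hφ y] at this
  have hnegmap : Tendsto (fun t : ℝ => -t) (𝓝[<] (0:ℝ)) (𝓝[>] (0:ℝ)) := by
    refine tendsto_nhdsWithin_of_tendsto_nhds_of_eventually_within _ ?_ ?_
    · have h : Tendsto (fun t : ℝ => -t) (𝓝 (0:ℝ)) (𝓝 (0:ℝ)) := by
        simpa using (continuous_neg.tendsto (0:ℝ))
      exact h.mono_left nhdsWithin_le_nhds
    · exact eventually_nhdsWithin_of_forall fun t ht => by simpa using ht
  have hneg : Tendsto (nslope x y) (𝓝[<] (0:ℝ)) (𝓝 (φ y)) := by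
    have h1 : Tendsto (fun t : ℝ => -(nslope x (-y) (-t))) (𝓝[<] (0:ℝ)) (𝓝 (-(φ (-y)))) := by
      have h2 := (tendsto_nslope x (-y)).comp hnegmap
      rw [gder_eq_support hx hs hφ (-y)] at h2
      exact h2.neg
    have h3 : -(φ (-y)) = φ y := by rw [map_neg]; ring
    rw [h3] at h1
    refine h1.congr' ?_
    refine eventually_nhdsWithin_of_forall fun t ht => ?_
    have ht0 : t < 0 := ht
    show -((-t)⁻¹ * (‖x + (-t) • (-y)‖ - ‖x‖)) = t⁻¹ * (‖x + t • y‖ - ‖x‖)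
    have h5 : (-t) • (-y) = t • y := by simp
    rw [h5, inv_neg]
    ring
  have := hneg.sup hpos
  rwa [nhdsLT_sup_nhdsGT] at this




lemma rigidity_component (G : SimpleGraph V) (p u : V → X) {v w : V}
    (h : s(v,w) ∈ G.edgeSet) (t : ℝ) :
    (t⁻¹ • (rigidityMap G (p + t • u) - rigidityMap G p)) ⟨s(v,w), h⟩
      = t⁻¹ * (‖(p v - p w) + t • (u v - u w)‖ - ‖p v - p w‖) := by
  have hvec : (p + t • u) v - (p + t • u) w = (p v - p w) + t • (u v - u w) := by
    simp only [Pi.add_apply, Pi.smul_apply, smul_sub]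
    abel
  simp only [Pi.smul_apply, Pi.sub_apply, rigidityMap, Sym2.lift_mk, hvec, smul_eq_mul]

lemma flex_support [FiniteDimensional ℝ X] {G' : SimpleGraph V} {p u : V → X}
    (hf : IsInfFlex G' p u) {v w : V} (h : G'.Adj v w) (hpvw : p v ≠ p w)
    (hs : NormSmoothAt (‖p v - p w‖⁻¹ • (p v - p w)))
    {φ : X →L[ℝ] ℝ} (hφ : IsSupportFunctional φ (‖p v - p w‖⁻¹ • (p v - p w))) :
    φ (u v - u w) = 0 := by
  have hx : p v - p w ≠ 0 := sub_ne_zero.2 hpvw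
  have h1 := tendsto_support hx hs hφ (u v - u w)
  have h2 : Tendsto (fun t : ℝ =>
      (t⁻¹ • (rigidityMap G' (p + t • u) - rigidityMap G' p)) ⟨s(v,w), G'.mem_edgeSet.2 h⟩)
      (𝓝[≠] (0:ℝ)) (𝓝 0) := by
    have := tendsto_pi_nhds.1 hf ⟨s(v,w), G'.mem_edgeSet.2 h⟩
    simpa using this
  have h2' : Tendsto (fun t : ℝ => t⁻¹ * (‖(p v - p w) + t • (u v - u w)‖ - ‖p v - p w‖))
      (𝓝[≠] (0:ℝ)) (𝓝 0) := by
    refine h2.congr fun t => ?_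
    exact rigidity_component G' p u _ t
  exact tendsto_nhds_unique h1 h2'

lemma ker_isInfFlex [FiniteDimensional ℝ X] {G : SimpleGraph V} {p : V → X}
    (hp : Function.Injective p) (hwp : WellPositioned G p)
    {R : (V → X) →ₗ[ℝ] (G.edgeSet → ℝ)} (hR : IsRigidityMatrix G p R)
    {u : V → X} (hu : R u = 0) : IsInfFlex G p u := by
  rw [IsInfFlex, tendsto_pi_nhds]
  rintro ⟨e, he⟩
  induction e using Sym2.ind with
  | _ v w =>
    have h : G.Adj v w := G.mem_edgeSet.1 he
    obtain ⟨φ, hφ, hRapp⟩ := hR h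
    have hx : p v - p w ≠ 0 := sub_ne_zero.2 fun hh => h.ne (hp hh)
    have h0 : φ (u v - u w) = 0 := by
      have := hRapp u
      rw [hu] at this
      simpa using this.symm
    have h1 := tendsto_support hx (hwp h) hφ (u v - u w)
    rw [h0] at h1
    have : (0 : G.edgeSet → ℝ) ⟨s(v,w), he⟩ = 0 := rfl
    rw [this]
    refine h1.congr fun t => ?_
    exact (rigidity_component G p u he t).symm

end MaxAux

end MaxwellAux

section MaxwellEquiv
open Filter Set

namespace MaxAux

variable {Γ : Type*} [Group Γ]

lemma rigidity_equivariant [FiniteDimensional ℝ X]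
    {G : SimpleGraph V} {p : V → X}
    {θ : Γ →* Equiv.Perm V} {τ : Γ →* (X ≃ₗ[ℝ] X)}
    (hθ : IsGraphAction G θ) (hτ : IsIsometricRep τ) (hsym : IsSymmetricFramework G p θ τ)
    (hwp : WellPositioned G p)
    {R : (V → X) →ₗ[ℝ] (G.edgeSet → ℝ)} (hR : IsRigidityMatrix G p R) (γ : Γ) :
    (permRep (edgePerm G θ hθ γ⁻¹)) ∘ₗ R = R ∘ₗ tauPV (τ γ) (θ γ) := by
  apply LinearMap.ext; intro u
  funext e
  obtain ⟨e', he⟩ := e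
  induction e' using Sym2.ind with
  | _ v w =>
    have h : G.Adj v w := G.mem_edgeSet.1 he
    have h' : G.Adj (θ γ⁻¹ v) (θ γ⁻¹ w) := (hθ γ⁻¹ v w).1 h
    obtain ⟨φ₁, hφ₁, hR₁⟩ := hR h'
    obtain ⟨φ₂, hφ₂, hR₂⟩ := hR h
    have hev : edgePerm G θ hθ γ⁻¹ ⟨s(v,w), he⟩
        = ⟨s(θ γ⁻¹ v, θ γ⁻¹ w), (G.mem_edgeSet).mpr h'⟩ :=
      Subtype.ext (Sym2.map_pair_eq _ _ _)
    have lhs : ((permRep (edgePerm G θ hθ γ⁻¹)) ∘ₗ R) u ⟨s(v,w), he⟩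
        = φ₁ (u (θ γ⁻¹ v) - u (θ γ⁻¹ w)) := by
      show (R u) (edgePerm G θ hθ γ⁻¹ ⟨s(v,w), he⟩) = _
      rw [hev]
      exact hR₁ u
    have htau : ∀ z : V, (tauPV (τ γ) (θ γ) u) z = τ γ (u (θ γ⁻¹ z)) := by
      intro z
      rw [map_inv θ]
      rfl
    have rhs : (R ∘ₗ tauPV (τ γ) (θ γ)) u ⟨s(v,w), he⟩
        = φ₂ (τ γ (u (θ γ⁻¹ v) - u (θ γ⁻¹ w))) := by
      show R (tauPV (τ γ) (θ γ) u) ⟨s(v,w), he⟩ = _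
      rw [hR₂ (tauPV (τ γ) (θ γ) u), htau v, htau w, ← map_sub (τ γ)]
    have key : ∀ z : X, φ₂ (τ γ z) = φ₁ z := by
      intro z
      set d : X := p (θ γ⁻¹ v) - p (θ γ⁻¹ w) with hd
      have hTd : τ γ d = p v - p w := by
        rw [hd, map_sub, hsym γ (θ γ⁻¹ v), hsym γ (θ γ⁻¹ w)]
        have hvv : θ γ (θ γ⁻¹ v) = v := by rw [map_inv θ]; exact Equiv.apply_symm_apply _ _
        have hww : θ γ (θ γ⁻¹ w) = w := by rw [map_inv θ]; exact Equiv.apply_symm_apply _ _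
        rw [hvv, hww]
      have hnd : ‖d‖ = ‖p v - p w‖ := by rw [← hTd]; exact (hτ γ d).symm
      set ψ : X →L[ℝ] ℝ :=
        φ₂.comp (LinearMap.toContinuousLinearMap ((τ γ : X ≃ₗ[ℝ] X) : X →ₗ[ℝ] X)) with hψdef
      have hψz : ∀ z : X, ψ z = φ₂ (τ γ z) := by
        intro z
        rw [hψdef]
        simp [LinearMap.coe_toContinuousLinearMap']
      have hψ : IsSupportFunctional ψ (‖d‖⁻¹ • d) := by
        constructor
        · intro z hz
          rw [hψz]
          exact hφ₂.1 (τ γ z) (by rw [hτ γ z]; exact hz)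
        · rw [hψz, map_smul, hTd, hnd]
          exact hφ₂.2
      obtain ⟨χ, hχ, huniq⟩ := hwp h'
      have e1 : ψ = χ := huniq ψ hψ
      have e2 : φ₁ = χ := huniq φ₁ hφ₁
      rw [← hψz z, e1, e2]
    rw [lhs, rhs, key]

end MaxAux

end MaxwellEquiv

/-- Symmetry-extended Maxwell rule (character form): for an isostatic
`Γ`-symmetric well-positioned framework, `χ(P_E) = χ(τ ⊗ P_V) - χ((τ ⊗ P_V)^{(T)})`. -/
theorem symmetric_maxwell_characters
    {X : Type*} [NormedAddCommGroup X] [NormedSpace ℝ X] [FiniteDimensional ℝ X]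
    {V : Type*} [Fintype V] [DecidableEq V] {Γ : Type*} [Group Γ] [Finite Γ]
    (G : SimpleGraph V) [Fintype ↥G.edgeSet] (p : V → X) (hp : Function.Injective p)
    (θ : Γ →* Equiv.Perm V) (τ : Γ →* (X ≃ₗ[ℝ] X))
    (hθ : IsGraphAction G θ) (hτ : IsIsometricRep τ)
    (hsym : IsSymmetricFramework G p θ τ)
    (hwp : WellPositioned G p) (hiso : Isostatic G p) :
    ∀ R : (V → X) →ₗ[ℝ] (↥G.edgeSet → ℝ), IsRigidityMatrix G p R →
      trivialFlexes G p = (LinearMap.ker R : Set (V → X)) ∧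
      ∀ γ : Γ, ∃ hinv : ∀ u ∈ LinearMap.ker R, tauPV (τ γ) (θ γ) u ∈ LinearMap.ker R,
        LinearMap.trace ℝ (↥G.edgeSet → ℝ) (permRep (edgePerm G θ hθ γ⁻¹)) =
          LinearMap.trace ℝ (V → X) (tauPV (τ γ) (θ γ)) -
            LinearMap.trace ℝ ↥(LinearMap.ker R) ((tauPV (τ γ) (θ γ)).restrict hinv) := by
  classical
  intro R hR
  have hflex_ker : ∀ u : V → X, IsInfFlex G p u → R u = 0 := by
    intro u hu
    funext e
    simp only [Pi.zero_apply]
    obtain ⟨e', he⟩ := e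
    induction e' using Sym2.ind with
    | _ v w =>
      have h : G.Adj v w := G.mem_edgeSet.1 he
      obtain ⟨φ, hφ, hRapp⟩ := hR h
      have h0 := MaxAux.flex_support hu h (fun hh => h.ne (hp hh)) (hwp h) hφ
      exact (hRapp u).trans h0
  have hpart1 : trivialFlexes G p = (LinearMap.ker R : Set (V → X)) := by
    ext u
    simp only [trivialFlexes, Set.mem_setOf_eq, SetLike.mem_coe, LinearMap.mem_ker]
    constructor
    · intro h
      exact hflex_ker u h.1
    · intro h
      exact hiso.1 u (MaxAux.ker_isInfFlex hp hwp hR h)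
  -- surjectivity of the rigidity matrix
  have hrange : LinearMap.range R = ⊤ := by
    by_contra hne
    obtain ⟨a, ha⟩ : ∃ a, a ∉ LinearMap.range R := by
      by_contra hall
      push_neg at hall
      exact hne (Submodule.eq_top_iff'.2 hall)
    have hq0 : (LinearMap.range R).mkQ a ≠ 0 := by
      simpa [Submodule.Quotient.mk_eq_zero] using ha
    obtain ⟨ψ, hψ⟩ : ∃ ψ : Module.Dual ℝ ((↥G.edgeSet → ℝ) ⧸ LinearMap.range R),
        ψ ((LinearMap.range R).mkQ a) ≠ 0 := by
      by_contra hc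
      push_neg at hc
      exact hq0 ((Module.forall_dual_apply_eq_zero_iff ℝ _).1 hc)
    set f : (↥G.edgeSet → ℝ) →ₗ[ℝ] ℝ := ψ ∘ₗ (LinearMap.range R).mkQ with hfdef
    have hf0 : ∀ z ∈ LinearMap.range R, f z = 0 := by
      intro z hz
      have hz0 : (LinearMap.range R).mkQ z = 0 := (Submodule.Quotient.mk_eq_zero _).2 hz
      simp [hfdef, hz0]
    have hfa : f a ≠ 0 := by simpa [hfdef] using hψ
    set c : ↥G.edgeSet → ℝ := fun e => f (Pi.single e 1) with hcdef
    have hfb : ∀ b : ↥G.edgeSet → ℝ, f b = ∑ e, b e * c e := by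
      intro b
      have hb : b = ∑ e : ↥G.edgeSet, b e • (Pi.single e (1:ℝ) : ↥G.edgeSet → ℝ) := by
        funext i
        rw [Finset.sum_apply]
        simp [Pi.single_apply]
      conv_lhs => rw [hb]
      rw [map_sum]
      refine Finset.sum_congr rfl fun e _ => ?_
      rw [map_smul, smul_eq_mul, hcdef]
    obtain ⟨e₀, he₀⟩ : ∃ e₀, c e₀ ≠ 0 := by
      by_contra hc
      push_neg at hc
      apply hfa
      rw [hfb a]
      simp [hc]
    refine hiso.2 e₀.1 e₀.2 ?_
    intro u hu
    have hcomp : ∀ (e : ↥G.edgeSet), e ≠ e₀ → R u e = 0 := by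
      intro e
      obtain ⟨e', he⟩ := e
      revert he
      induction e' using Sym2.ind with
      | _ v w =>
        intro he hne
        have h : G.Adj v w := G.mem_edgeSet.1 he
        have h' : (G.deleteEdges {e₀.1}).Adj v w := by
          rw [SimpleGraph.deleteEdges_adj]
          refine ⟨h, fun hmem => ?_⟩
          rw [Set.mem_singleton_iff] at hmem
          exact hne (Subtype.ext hmem)
        obtain ⟨φ, hφ, hRapp⟩ := hR h
        have h0 := MaxAux.flex_support hu h' (fun hh => h.ne (hp hh)) (hwp h) hφ
        exact (hRapp u).trans h0
    have hker : R u = 0 := by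
      funext e
      simp only [Pi.zero_apply]
      rcases eq_or_ne e e₀ with rfl | hne
      · have h1 : f (R u) = 0 := hf0 _ ⟨u, rfl⟩
        rw [hfb] at h1
        rw [Finset.sum_eq_single e] at h1
        · rcases mul_eq_zero.1 h1 with h | h
          · exact h
          · exact absurd h he₀
        · intro b _ hbe
          rw [hcomp b hbe, zero_mul]
        · intro hmem
          exact absurd (Finset.mem_univ e) hmem
      · exact hcomp e hne
    have htriv := hiso.1 u (MaxAux.ker_isInfFlex hp hwp hR hker)
    exact ⟨hu, htriv.2⟩
  refine ⟨hpart1, ?_⟩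
  intro γ
  have hcomm := MaxAux.rigidity_equivariant hθ hτ hsym hwp hR γ
  have hinv : ∀ u ∈ LinearMap.ker R, tauPV (τ γ) (θ γ) u ∈ LinearMap.ker R := by
    intro u hu
    rw [LinearMap.mem_ker] at hu ⊢
    have h2 := LinearMap.congr_fun hcomm u
    simp only [LinearMap.comp_apply] at h2
    rw [hu, map_zero] at h2
    exact h2.symm
  refine ⟨hinv, ?_⟩
  set A : (V → X) →ₗ[ℝ] (V → X) := tauPV (τ γ) (θ γ) with hA
  set P : (↥G.edgeSet → ℝ) →ₗ[ℝ] (↥G.edgeSet → ℝ) := permRep (edgePerm G θ hθ γ⁻¹) with hP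
  obtain ⟨sR, hsR⟩ := R.exists_rightInverse_of_surjective hrange
  set B : (V → X) →ₗ[ℝ] (V → X) := (LinearMap.id - sR ∘ₗ R) ∘ₗ A with hB
  have hsplit : A = sR ∘ₗ (R ∘ₗ A) + B := by
    apply LinearMap.ext
    intro x
    simp [hB, LinearMap.sub_apply, LinearMap.comp_apply, LinearMap.add_apply]
  have htrA : LinearMap.trace ℝ (V → X) A
      = LinearMap.trace ℝ (V → X) (sR ∘ₗ (R ∘ₗ A)) + LinearMap.trace ℝ (V → X) B := by
    conv_lhs => rw [hsplit]
    rw [map_add]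
  have h1 : LinearMap.trace ℝ (V → X) (sR ∘ₗ (R ∘ₗ A))
      = LinearMap.trace ℝ (↥G.edgeSet → ℝ) P := by
    rw [LinearMap.trace_comp_comm']
    have hPP : (R ∘ₗ A) ∘ₗ sR = P := by
      rw [← hcomm]
      apply LinearMap.ext
      intro a
      have hra := LinearMap.congr_fun hsR a
      simp only [LinearMap.comp_apply, LinearMap.id_apply] at hra ⊢
      rw [hra]
    rw [hPP]
  have hBmem : ∀ x, B x ∈ LinearMap.ker R := by
    intro x
    rw [LinearMap.mem_ker]
    have hra := LinearMap.congr_fun hsR (R (A x))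
    simp only [LinearMap.comp_apply, LinearMap.id_apply] at hra
    simp only [hB, LinearMap.comp_apply, LinearMap.sub_apply, LinearMap.id_apply, map_sub, hra]
    exact sub_self _
  have h2 : LinearMap.trace ℝ (V → X) B
      = LinearMap.trace ℝ ↥(LinearMap.ker R) (A.restrict hinv) := by
    rw [← LinearMap.trace_restrict_eq_of_forall_mem (LinearMap.ker R) B hBmem
      (fun x _ => hBmem x)]
    congr 1
    apply LinearMap.ext
    intro x
    apply Subtype.ext
    have hx0 : R (A x.1) = 0 := LinearMap.mem_ker.1 (hinv x.1 x.2)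
    simp only [LinearMap.restrict_coe_apply, hB, LinearMap.comp_apply, LinearMap.sub_apply,
      LinearMap.id_apply, hx0, map_zero, sub_zero]
  rw [htrA, h1, h2]
  ring

end
end
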